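/- arXiv:2403.05414 — 12 statements merged into one kernel-verified Lean document; each statement's English description precedes it below -/
import Mathlib

section
/- Let d, m be positive integers, (P) a predicate on integers, and λ = (λ_1, ..., λ_ℓ) a partition with multiplicity sequence (f_u)_{u≥0}. Then the following are equivalent: (a) λ_k - λ_{k+m} ≥ d for all 1 ≤ k ≤ ℓ - m, and for all 1 ≤ k ≤ ℓ - m + 1, if λ_k - λ_{k+m-1} ≤ d-1 then λ_k + ... + λ_{k+m-1} satisfies (P); (b) f_u + ... + f_{u+d-1} ≤ m for all u ≥ 0, and for all u ≥ 0, if f_u + ... + f_{u+d-1} = m then u·f_u + ... + (u+d-1)·f_{u+d-1} satisfies (P). -/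
/-!
Let `c u` be the number of parts `≥ u`. As the parts are non-increasing, the `i`-th part
(counted from `0`) is `≥ u` iff `i < c u`, so the parts lying in `[u, u + d)` occupy exactly the
positions `[c (u + d), c u)`: there are `f_u + ⋯ + f_{u+d-1} = c u - c (u + d)` of them, with sum
`u f_u + ⋯ + (u+d-1) f_{u+d-1}`. Hence `λ_k - λ_{k+m} ≥ d` for all `k` says that each such block
has at most `m` parts, and a window of `m` consecutive parts with spread `< d` is precisely such a
block of size `m`, for `u` the smallest part of the window.
-/

open Finset

namespace List

variable {α : Type*} {R : α → α → Prop} {p : α → Bool} {l : List α}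

theorem filter_eq_take_countP_of_pairwise (hl : l.Pairwise R) (hp : ∀ a b, R a b → p b → p a) :
    l.filter p = l.take (l.countP p) := by
  induction l with
  | nil => rfl
  | cons a l ih =>
    obtain ⟨ha, hl⟩ := pairwise_cons.mp hl
    by_cases hpa : p a
    · simp [filter_cons_of_pos hpa, countP_cons_of_pos hpa, ih hl]
    · have hnone : ∀ b ∈ l, ¬ p b := fun b hb hpb => hpa (hp a b (ha b hb) hpb)
      simp [filter_cons_of_neg hpa, countP_cons_of_neg hpa, filter_eq_nil_iff.mpr hnone,
        countP_eq_zero.mpr hnone]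

theorem countP_drop_countP_of_pairwise (hl : l.Pairwise R) (hp : ∀ a b, R a b → p b → p a) :
    (l.drop (l.countP p)).countP p = 0 := by
  have htake : (l.take (l.countP p)).countP p = l.countP p := by
    rw [← filter_eq_take_countP_of_pairwise hl hp, countP_filter]
    simp only [Bool.and_self]
  have hsplit := countP_append (p := p) (l₁ := l.take (l.countP p)) (l₂ := l.drop (l.countP p))
  rw [take_append_drop] at hsplit
  omega

theorem filter_not_eq_drop_countP_of_pairwise (hl : l.Pairwise R)
    (hp : ∀ a b, R a b → p b → p a) :
    l.filter (fun x => !p x) = l.drop (l.countP p) := by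
  conv_lhs => rw [← take_append_drop (l.countP p) l, filter_append,
    ← filter_eq_take_countP_of_pairwise hl hp, filter_filter]
  simp only [Bool.not_and_self, filter_false, nil_append, filter_eq_self, Bool.not_eq_true']
  exact fun x hx => by simpa using countP_eq_zero.mp (countP_drop_countP_of_pairwise hl hp) x hx

theorem getElem_iff_lt_countP_of_pairwise (hl : l.Pairwise R) (hp : ∀ a b, R a b → p b → p a)
    {i : ℕ} (hi : i < l.length) : p l[i] ↔ i < l.countP p := by
  constructor
  · intro hpi
    by_contra! hci
    refine countP_eq_zero.mp (countP_drop_countP_of_pairwise hl hp) l[i] ?_ hpi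
    exact mem_drop_iff_getElem.mpr ⟨i - l.countP p, by omega, by congr 1; omega⟩
  · intro hic
    have hmem : l[i] ∈ l.filter p := by
      rw [filter_eq_take_countP_of_pairwise hl hp]
      exact mem_take_iff_getElem.mpr ⟨i, by omega, rfl⟩
    exact of_mem_filter hmem

theorem sum_count_nsmul_eq_sum_map_filter [DecidableEq α] {M : Type*} [AddCommMonoid M]
    (s : Finset α) (f : α → M) (l : List α) :
    ∑ x ∈ s, l.count x • f x = ((l.filter (· ∈ s)).map f).sum := by
  induction l with
  | nil => simp
  | cons a l ih =>
    simp only [count_cons, add_smul, sum_add_distrib, ih, beq_iff_eq, ite_smul, one_smul,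
      zero_smul, filter_cons]
    by_cases ha : a ∈ s <;> simp [ha, add_comm]

end List

def countGe (L : List ℕ) (u : ℕ) : ℕ := L.countP (u ≤ ·)

section Antitone

variable {L : List ℕ} {u v : ℕ}

theorem countGe_le_countGe (h : u ≤ v) : countGe L v ≤ countGe L u :=
  List.countP_mono_left fun x _ hx => by simp only [decide_eq_true_eq] at hx ⊢; omega

theorem le_getElem_iff_lt_countGe (hL : L.Pairwise (· ≥ ·)) {i : ℕ} (hi : i < L.length) :
    u ≤ L[i] ↔ i < countGe L u := by
  simpa [countGe] using List.getElem_iff_lt_countP_of_pairwise (p := (u ≤ ·)) hL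
    (fun a b hab hb => by simp only [decide_eq_true_eq] at hb ⊢; omega) hi

theorem getElem_lt_iff_countGe_le (hL : L.Pairwise (· ≥ ·)) {i : ℕ} (hi : i < L.length) :
    L[i] < u ↔ countGe L u ≤ i := by
  rw [← not_le, le_getElem_iff_lt_countGe hL hi, not_lt]

theorem filter_mem_Ico_eq (hL : L.Pairwise (· ≥ ·)) (huv : u ≤ v) :
    L.filter (· ∈ Ico u v) = (L.take (countGe L u)).drop (countGe L v) := by
  have hp : ∀ w, ∀ a b : ℕ, a ≥ b → decide (w ≤ b) → decide (w ≤ a) := by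
    intro w a b hab hb; simp only [decide_eq_true_eq] at hb ⊢; omega
  have hsplit :
      L.filter (· ∈ Ico u v) = (L.filter (u ≤ ·)).filter (fun x => !decide (v ≤ x)) := by
    rw [List.filter_filter]
    congr 1; funext x
    rw [Bool.eq_iff_iff]
    simp only [Bool.and_eq_true, Bool.not_eq_true', decide_eq_true_eq, decide_eq_false_iff_not,
      Finset.mem_Ico]
    omega
  have hcount : (L.filter (u ≤ ·)).countP (v ≤ ·) = countGe L v := by
    rw [List.countP_filter, countGe]
    congr 1; funext x
    rw [Bool.eq_iff_iff]
    simp only [Bool.and_eq_true, decide_eq_true_eq]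
    omega
  rw [hsplit, List.filter_not_eq_drop_countP_of_pairwise (hL.sublist (List.filter_sublist)) (hp v),
    hcount, List.filter_eq_take_countP_of_pairwise hL (hp u)]
  rfl

theorem sum_range_mul_count_add (hL : L.Pairwise (· ≥ ·)) (d : ℕ) :
    ∑ t ∈ range d, (u + t) * L.count (u + t)
      = ((L.take (countGe L u)).drop (countGe L (u + d))).sum := by
  have h := List.sum_count_nsmul_eq_sum_map_filter (Ico u (u + d)) id L
  rw [List.map_id, filter_mem_Ico_eq hL (Nat.le_add_right u d), Finset.sum_Ico_eq_sum_range,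
    Nat.add_sub_cancel_left] at h
  simpa [mul_comm] using h

theorem sum_range_count_add (hL : L.Pairwise (· ≥ ·)) (d : ℕ) :
    ∑ t ∈ range d, L.count (u + t) = countGe L u - countGe L (u + d) := by
  have h := List.sum_count_nsmul_eq_sum_map_filter (Ico u (u + d)) (fun _ => 1) L
  rw [filter_mem_Ico_eq hL (Nat.le_add_right u d), Finset.sum_Ico_eq_sum_range,
    Nat.add_sub_cancel_left] at h
  have hlen : countGe L u ≤ L.length := List.countP_le_length
  simpa [hlen] using h

theorem forall_getElem_add_le_iff (hL : L.Pairwise (· ≥ ·)) (d m : ℕ) :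
    (∀ k (h : k + m < L.length), L[k + m] + d ≤ L[k]) ↔
      ∀ u, countGe L u - countGe L (u + d) ≤ m := by
  constructor
  · intro hgap u
    by_contra! hu
    set k := countGe L (u + d)
    have hlen : countGe L u ≤ L.length := List.countP_le_length
    have h1 : u ≤ L[k + m]'(by omega) := (le_getElem_iff_lt_countGe hL _).mpr (by omega)
    have h2 : L[k]'(by omega) < u + d := (getElem_lt_iff_countGe_le hL _).mpr le_rfl
    have := hgap k (by omega)
    omega
  · intro hwin k hk
    by_contra! hlt
    have h1 : k + m < countGe L L[k + m] := (le_getElem_iff_lt_countGe hL hk).mp le_rfl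
    have h2 : countGe L (L[k + m] + d) ≤ k := (getElem_lt_iff_countGe_le hL _).mp hlt
    have := hwin L[k + m]
    omega

theorem forall_tight_window_iff (hL : L.Pairwise (· ≥ ·)) {d m : ℕ} (hd : 0 < d) (hm : 0 < m)
    (hwin : ∀ u, countGe L u - countGe L (u + d) ≤ m) (P : ℕ → Prop) :
    (∀ k (h : k + m ≤ L.length), L[k] ≤ L[k + m - 1] + (d - 1) → P ((L.drop k).take m).sum) ↔
      ∀ u, countGe L u - countGe L (u + d) = m →
        P ((L.take (countGe L u)).drop (countGe L (u + d))).sum := by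
  constructor
  · intro hP u hu
    set k := countGe L (u + d)
    have hlen : countGe L u ≤ L.length := List.countP_le_length
    have hB : countGe L u = k + m := by
      have := countGe_le_countGe (L := L) (Nat.le_add_right u d); omega
    have h1 : L[k]'(by omega) < u + d := (getElem_lt_iff_countGe_le hL _).mpr le_rfl
    have h2 : u ≤ L[k + m - 1]'(by omega) := (le_getElem_iff_lt_countGe hL _).mpr (by omega)
    rw [hB, List.drop_take, Nat.add_sub_cancel_left]
    exact hP k (by omega) (by omega)
  · intro hP k hk hle
    set u := L[k + m - 1]
    have h1 : k + m - 1 < countGe L u := (le_getElem_iff_lt_countGe hL _).mp le_rfl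
    have h2 : countGe L (u + d) ≤ k := (getElem_lt_iff_countGe_le hL _).mp (by omega)
    have := hwin u
    have hA : countGe L (u + d) = k := by omega
    have hB : countGe L u = k + m := by omega
    have := hP u (by omega)
    rwa [hB, hA, List.drop_take, Nat.add_sub_cancel_left] at this

end Antitone

/-- equivalence between difference/parity-type conditions on the parts of a
partition and conditions on its multiplicity sequence, for an arbitrary predicate `P`. -/
theorem stmt_1 (d m : ℕ) (hd : 0 < d) (hm : 0 < m) (P : ℕ → Prop) (L : List ℕ)
    (hL : List.Pairwise (· ≥ ·) L) :
    ((∀ (k : ℕ) (h : k + m < L.length), L.get ⟨k + m, h⟩ + d ≤ L.get ⟨k, by omega⟩) ∧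
      ∀ (k : ℕ) (h : k + m ≤ L.length),
        L.get ⟨k, by omega⟩ ≤ L.get ⟨k + m - 1, by omega⟩ + (d - 1) →
          P (((L.drop k).take m).sum)) ↔
    ((∀ u : ℕ, ∑ t ∈ Finset.range d, L.count (u + t) ≤ m) ∧
      ∀ u : ℕ, (∑ t ∈ Finset.range d, L.count (u + t)) = m →
        P (∑ t ∈ Finset.range d, (u + t) * L.count (u + t))) := by
  simp only [List.get_eq_getElem, sum_range_count_add hL, sum_range_mul_count_add hL]
  rw [forall_getElem_add_le_iff hL]
  exact and_congr_right fun hwin => forall_tight_window_iff hL hd hm hwin P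
end

section
/- For integers r ≥ 2 and 1 ≤ i < r, the set U_{i,r} of partitions λ = (λ_1, ..., λ_ℓ) into positive parts satisfying λ_j - λ_{j+r-1} ≥ 2 for all j, with λ_j - λ_{j+r-2} ≤ 1 only if λ_j + λ_{j+1} + ... + λ_{j+r-2} ≡ i-1 (mod 2), and having at most i-1 parts equal to 1, coincides with the set of partitions whose multiplicity sequence (f_u)_{u≥0} satisfies: f_0 = 0, f_1 ≤ i-1, f_u + f_{u+1} ≤ r-1 for all u ≥ 1, and whenever f_u + f_{u+1} = r-1 for u ≥ 1, one has u·f_u + (u+1)·f_{u+1} ≡ i-1 (mod 2). -/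
/-!
In a non-increasing list the parts equal to `u` or `u + 1` occupy one block of consecutive
positions, from the number of parts `≥ u + 2` up to the number of parts `≥ u`; its length is
`f_u + f_{u+1}` and its sum is `u f_u + (u + 1) f_{u+1}`. A window `λ_k, …, λ_{k+m}` with
`λ_k ≤ λ_{k+m} + 1` lies inside the block of `u = λ_{k+m}`, and every block longer than `m`
starts with such a window. So `λ_k - λ_{k+r-1} ≥ 2` says exactly that blocks have length
`≤ r - 1`, and then a window of length `r - 1` with `λ_k ≤ λ_{k+r-2} + 1` is a whole block of
length `r - 1`, which turns the parity condition on its sum into the one on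
`u f_u + (u + 1) f_{u+1}`.
-/

namespace List

theorem le_getElem_iff_lt_countP {α : Type*} [LinearOrder α] {L : List α}
    (hL : L.Pairwise (· ≥ ·)) (v : α) {j : ℕ} (hj : j < L.length) :
    v ≤ L[j] ↔ j < L.countP (v ≤ ·) := by
  induction L generalizing j with
  | nil => simp at hj
  | cons a l ih =>
    obtain ⟨ha, hl⟩ := pairwise_cons.mp hL
    by_cases hva : v ≤ a
    · cases j with
      | zero => simp [hva]
      | succ j => simp [hva, ih hl (Nat.lt_of_succ_lt_succ hj)]
    · have hlt : ∀ x ∈ l, x < v := fun x hx => (ha x hx).trans_lt (not_le.mp hva)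
      have h0 : l.countP (v ≤ ·) = 0 := countP_eq_zero.2 (by simpa using hlt)
      cases j with
      | zero => simp [hva, h0]
      | succ j => simp [hva, h0, hlt _ (getElem_mem (Nat.lt_of_succ_lt_succ hj))]

theorem countP_le_eq_count_add_countP_succ_le (L : List ℕ) (v : ℕ) :
    L.countP (v ≤ ·) = L.count v + L.countP (v + 1 ≤ ·) := by
  induction L with
  | nil => rfl
  | cons a l ih =>
    simp only [countP_cons, count_cons, ih, decide_eq_true_eq, beq_iff_eq]
    split_ifs <;> omega

theorem sum_map_eq_of_forall_mem_pair {α M : Type*} [DecidableEq α] [AddCommMonoid M]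
    {W : List α} {a b : α} (hab : a ≠ b) (hW : ∀ x ∈ W, x = a ∨ x = b) (f : α → M) :
    (W.map f).sum = W.count a • f a + W.count b • f b := by
  rw [Finset.sum_list_map_count, ← Finset.sum_pair (f := fun x => W.count x • f x) hab]
  refine Finset.sum_subset (fun x hx => by simpa using hW x (mem_toFinset.1 hx)) ?_
  intro x _ hx
  rw [count_eq_zero.2 (mt mem_toFinset.2 hx), zero_smul]

end List

open List

theorem countP_le_eq_countP_add_two_le_add_count (L : List ℕ) (u : ℕ) :
    L.countP (u ≤ ·) = L.countP (u + 2 ≤ ·) + (L.count u + L.count (u + 1)) := by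
  have h : L.countP (u + 1 ≤ ·) = L.count (u + 1) + L.countP (u + 2 ≤ ·) :=
    countP_le_eq_count_add_countP_succ_le L (u + 1)
  rw [countP_le_eq_count_add_countP_succ_le, h]
  omega

section

variable {L : List ℕ} (hL : L.Pairwise (· ≥ ·))
include hL

theorem getElem_mem_block_iff (u : ℕ) {j : ℕ} (hj : j < L.length) :
    (u ≤ L[j] ∧ L[j] ≤ u + 1) ↔ L.countP (u + 2 ≤ ·) ≤ j ∧ j < L.countP (u ≤ ·) := by
  have := le_getElem_iff_lt_countP hL u hj
  have := le_getElem_iff_lt_countP hL (u + 2) hj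
  omega

theorem sum_block_eq (u : ℕ) :
    ((L.drop (L.countP (u + 2 ≤ ·))).take (L.count u + L.count (u + 1))).sum =
      u * L.count u + (u + 1) * L.count (u + 1) := by
  set W := (L.drop (L.countP (u + 2 ≤ ·))).take (L.count u + L.count (u + 1))
  have hsplit := countP_le_eq_countP_add_two_le_add_count L u
  have hle : L.countP (u ≤ ·) ≤ L.length := countP_le_length
  have hmem : ∀ x ∈ W, x = u ∨ x = u + 1 := by
    intro x hx
    obtain ⟨j, hj, rfl⟩ := mem_iff_getElem.1 hx
    simp only [W, length_take, length_drop] at hj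
    have := (getElem_mem_block_iff hL u (j := L.countP (u + 2 ≤ ·) + j) (by omega)).2
      ⟨by omega, by omega⟩
    simp only [W, getElem_take, getElem_drop]
    omega
  have hWcount : W.length = W.count u + W.count (u + 1) := by
    simpa using
      sum_map_eq_of_forall_mem_pair (Nat.succ_ne_self u).symm hmem (fun _ => (1 : ℕ))
  have hsum : W.sum = W.count u * u + W.count (u + 1) * (u + 1) := by
    simpa using sum_map_eq_of_forall_mem_pair (Nat.succ_ne_self u).symm hmem id
  have hsub : W.Sublist L := (take_sublist _ _).trans (drop_sublist _ _)
  have hu := hsub.count_le u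
  have hu1 := hsub.count_le (u + 1)
  have hWlen : W.length = L.count u + L.count (u + 1) := by
    simp only [W, length_take, length_drop]
    omega
  rw [hsum, show W.count u = L.count u by omega, show W.count (u + 1) = L.count (u + 1) by omega]
  ring

theorem exists_window_at_block_start {u m : ℕ} (hm : m < L.count u + L.count (u + 1)) :
    ∃ h : L.countP (u + 2 ≤ ·) + m < L.length,
      L[L.countP (u + 2 ≤ ·)] ≤ u + 1 ∧ u ≤ L[L.countP (u + 2 ≤ ·) + m] := by
  have hsplit := countP_le_eq_countP_add_two_le_add_count L u
  have hle : L.countP (u ≤ ·) ≤ L.length := countP_le_length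
  refine ⟨by omega, ?_, ?_⟩
  · exact ((getElem_mem_block_iff hL u (by omega)).2 ⟨le_rfl, by omega⟩).2
  · exact ((getElem_mem_block_iff hL u (by omega)).2 ⟨by omega, by omega⟩).1

theorem window_subset_block_of_getElem_le {k m : ℕ} (hk : k + m < L.length)
    (h : L[k] ≤ L[k + m] + 1) :
    L.countP (L[k + m] + 2 ≤ ·) ≤ k ∧ k + m < L.countP (L[k + m] ≤ ·) := by
  have := le_getElem_iff_lt_countP hL (L[k + m] + 2) (j := k) (by omega)
  have := le_getElem_iff_lt_countP hL L[k + m] hk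
  omega

theorem forall_getElem_add_two_le_iff (hpos : ∀ x ∈ L, 0 < x) (m : ℕ) :
    (∀ k (h : k + m < L.length), L[k + m] + 2 ≤ L[k]) ↔
      ∀ u, 1 ≤ u → L.count u + L.count (u + 1) ≤ m := by
  constructor
  · intro hgap u _
    by_contra! hm
    obtain ⟨h, hk, hkm⟩ := exists_window_at_block_start hL hm
    have := hgap _ h
    omega
  · intro hbound k hk
    by_contra! hnear
    have := window_subset_block_of_getElem_le hL hk (by omega)
    have := hbound L[k + m] (hpos _ (getElem_mem _))
    have := countP_le_eq_countP_add_two_le_add_count L L[k + m]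
    omega

theorem forall_window_sum_iff_forall_block_sum (hpos : ∀ x ∈ L, 0 < x) (m : ℕ)
    (hbound : ∀ u, 1 ≤ u → L.count u + L.count (u + 1) ≤ m + 1) (P : ℕ → Prop) :
    (∀ k (h : k + m < L.length), L[k] ≤ L[k + m] + 1 → P ((L.drop k).take (m + 1)).sum) ↔
      ∀ u, 1 ≤ u → L.count u + L.count (u + 1) = m + 1 →
        P (u * L.count u + (u + 1) * L.count (u + 1)) := by
  constructor
  · intro hwin u _ hu
    obtain ⟨h, hk, hkm⟩ := exists_window_at_block_start hL (u := u) (m := m) (by omega)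
    rw [← sum_block_eq hL, hu]
    exact hwin _ h (by omega)
  · intro hpar k hk hnear
    obtain ⟨hk2, hkm⟩ := window_subset_block_of_getElem_le hL hk hnear
    have hu : 1 ≤ L[k + m] := hpos _ (getElem_mem _)
    have := hbound _ hu
    have hsplit := countP_le_eq_countP_add_two_le_add_count L L[k + m]
    have hm : L.count L[k + m] + L.count (L[k + m] + 1) = m + 1 := by omega
    have hblock := sum_block_eq hL L[k + m]
    rw [show L.countP (L[k + m] + 2 ≤ ·) = k by omega, hm] at hblock
    rw [hblock]
    exact hpar _ hu hm

end

/-- the set `U_{i,r}` of partitions into positive parts with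
`λ_j - λ_{j+r-1} ≥ 2`, the Bressoud parity condition, and at most `i-1` parts equal to 1,
coincides with the corresponding set described via multiplicity sequences. -/
theorem stmt_3 (r i : ℕ) (hr : 2 ≤ r) (L : List ℕ)
    (hL : List.Pairwise (· ≥ ·) L) :
    ((∀ x ∈ L, 0 < x) ∧
      (∀ (k : ℕ) (h : k + (r - 1) < L.length),
        L.get ⟨k + (r - 1), h⟩ + 2 ≤ L.get ⟨k, by omega⟩) ∧
      (∀ (k : ℕ) (h : k + (r - 2) < L.length),
        L.get ⟨k, by omega⟩ ≤ L.get ⟨k + (r - 2), h⟩ + 1 →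
          (((L.drop k).take (r - 1)).sum) % 2 = (i - 1) % 2) ∧
      L.count 1 ≤ i - 1) ↔
    (L.count 0 = 0 ∧ L.count 1 ≤ i - 1 ∧
      (∀ u : ℕ, 1 ≤ u → L.count u + L.count (u + 1) ≤ r - 1) ∧
      ∀ u : ℕ, 1 ≤ u → L.count u + L.count (u + 1) = r - 1 →
        (u * L.count u + (u + 1) * L.count (u + 1)) % 2 = (i - 1) % 2) := by
  obtain ⟨m, rfl⟩ : ∃ m, r = m + 2 := ⟨r - 2, by omega⟩
  simp only [get_eq_getElem, Nat.add_sub_cancel, show m + 2 - 1 = m + 1 by omega]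
  have hpos_iff : (∀ x ∈ L, 0 < x) ↔ L.count 0 = 0 := by
    simp only [count_eq_zero, Nat.pos_iff_ne_zero]
    exact ⟨fun h h0 => h 0 h0 rfl, fun h x hx hx0 => h (hx0 ▸ hx)⟩
  have hwin := forall_window_sum_iff_forall_block_sum hL (m := m)
    (P := fun s => s % 2 = (i - 1) % 2)
  constructor
  · rintro ⟨hpos, hgap, hpar, h1⟩
    have hbound := (forall_getElem_add_two_le_iff hL hpos _).1 hgap
    exact ⟨hpos_iff.1 hpos, h1, hbound, (hwin hpos hbound).1 hpar⟩
  · rintro ⟨h0, h1, hbound, hpar⟩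
    have hpos := hpos_iff.2 h0
    exact ⟨hpos, (forall_getElem_add_two_le_iff hL hpos _).2 hbound,
      (hwin hpos hbound).2 hpar, h1⟩
end

section
/- Let r ≥ 2 and 1 ≤ i ≤ r-1 be integers. Let U_{j,r} be the set of partitions into positive parts with multiplicity sequence (f_u)_{u≥0} satisfying f_0 = 0, f_1 ≤ j-1, f_u + f_{u+1} ≤ r-1 for all u ≥ 1, and whenever f_u + f_{u+1} = r-1 (u ≥ 1), u·f_u + (u+1)·f_{u+1} ≡ j-1 (mod 2). Let Ũ_{j,r} be defined identically except with congruence ≡ j (mod 2). Then the map (f_u)_{u≥0} ↦ (f_0, f_1 - 1, f_2, f_3, ...) defines a bijection from U_{i+1,r} \ Ũ_{i,r} to Ũ_{i,r} \ U_{i-1,r} which decreases the weight by exactly 1. -/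
/-- The set `U_{j,r}`: partitions into positive parts (multiplicity sequences with `f 0 = 0`)
satisfying `f 1 ≤ j-1`, `f u + f (u+1) ≤ r-1` for `u ≥ 1`, and the Bressoud parity
condition `u·f_u + (u+1)·f_{u+1} ≡ j-1 (mod 2)` whenever `f u + f (u+1) = r-1`.
The bound on `f 1` is stated in `ℤ`, so that `U_{0,r} = ∅`. -/
def Uset (r j : ℕ) : Set (ℕ → ℕ) :=
  {f | (Function.support f).Finite ∧ f 0 = 0 ∧ (f 1 : ℤ) ≤ (j : ℤ) - 1 ∧
    (∀ u : ℕ, 1 ≤ u → f u + f (u + 1) ≤ r - 1) ∧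
    ∀ u : ℕ, 1 ≤ u → f u + f (u + 1) = r - 1 →
      ((u * f u + (u + 1) * f (u + 1) : ℤ)) % 2 = ((j : ℤ) - 1) % 2}

/-- The set `Ũ_{j,r}`: as `U_{j,r}` but with the parity condition `≡ j (mod 2)`. -/
def Utset (r j : ℕ) : Set (ℕ → ℕ) :=
  {f | (Function.support f).Finite ∧ f 0 = 0 ∧ (f 1 : ℤ) ≤ (j : ℤ) - 1 ∧
    (∀ u : ℕ, 1 ≤ u → f u + f (u + 1) ≤ r - 1) ∧
    ∀ u : ℕ, 1 ≤ u → f u + f (u + 1) = r - 1 →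
      ((u * f u + (u + 1) * f (u + 1) : ℤ)) % 2 = (j : ℤ) % 2}

/-- removing one part equal to `1` gives a bijection from
`U_{i+1,r} \ Ũ_{i,r}` to `Ũ_{i,r} \ U_{i-1,r}` decreasing the weight by exactly `1`. -/
theorem stmt_5 (r i : ℕ) (hr : 2 ≤ r) (hi1 : 1 ≤ i) (hi : i ≤ r - 1) :
    Set.BijOn (fun (f : ℕ → ℕ) u => if u = 1 then f 1 - 1 else f u)
      (Uset r (i + 1) \ Utset r i) (Utset r i \ Uset r (i - 1)) ∧
    ∀ f ∈ Uset r (i + 1) \ Utset r i,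
      (∑ᶠ u : ℕ, u * (if u = 1 then f 1 - 1 else f u)) + 1 = ∑ᶠ u : ℕ, u * f u := by
  have e1 : (((i + 1 : ℕ) : ℤ) - 1) % 2 = (i : ℤ) % 2 := by push_cast; ring_nf
  have e2 : (((i - 1 : ℕ) : ℤ) - 1) % 2 = (i : ℤ) % 2 := by omega
  -- characterization of the source
  have key1 : ∀ f : ℕ → ℕ, f ∈ Uset r (i + 1) \ Utset r i ↔
      (Function.support f).Finite ∧ f 0 = 0 ∧ f 1 = i ∧
      (∀ u : ℕ, 1 ≤ u → f u + f (u + 1) ≤ r - 1) ∧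
      ∀ u : ℕ, 1 ≤ u → f u + f (u + 1) = r - 1 →
        ((u * f u + (u + 1) * f (u + 1) : ℤ)) % 2 = (i : ℤ) % 2 := by
    intro f
    simp only [Set.mem_diff, Uset, Utset, Set.mem_setOf_eq, e1]
    constructor
    · rintro ⟨⟨h1, h2, h3, h4, h5⟩, hn⟩
      refine ⟨h1, h2, ?_, h4, h5⟩
      by_contra hne
      exact hn ⟨h1, h2, by omega, h4, h5⟩
    · rintro ⟨h1, h2, h3, h4, h5⟩
      refine ⟨⟨h1, h2, by omega, h4, h5⟩, ?_⟩
      rintro ⟨_, _, h3', _, _⟩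
      omega
  -- characterization of the target
  have key2 : ∀ g : ℕ → ℕ, g ∈ Utset r i \ Uset r (i - 1) ↔
      (Function.support g).Finite ∧ g 0 = 0 ∧ g 1 = i - 1 ∧
      (∀ u : ℕ, 1 ≤ u → g u + g (u + 1) ≤ r - 1) ∧
      ∀ u : ℕ, 1 ≤ u → g u + g (u + 1) = r - 1 →
        ((u * g u + (u + 1) * g (u + 1) : ℤ)) % 2 = (i : ℤ) % 2 := by
    intro g
    simp only [Set.mem_diff, Uset, Utset, Set.mem_setOf_eq, e2]
    constructor
    · rintro ⟨⟨h1, h2, h3, h4, h5⟩, hn⟩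
      refine ⟨h1, h2, ?_, h4, h5⟩
      by_contra hne
      exact hn ⟨h1, h2, by omega, h4, h5⟩
    · rintro ⟨h1, h2, h3, h4, h5⟩
      refine ⟨⟨h1, h2, by omega, h4, h5⟩, ?_⟩
      rintro ⟨_, _, h3', _, _⟩
      omega
  constructor
  · refine ⟨?_, ?_, ?_⟩
    · -- MapsTo
      intro f hf
      rw [key1] at hf
      obtain ⟨h1, h2, h3, h4, h5⟩ := hf
      rw [key2]
      refine ⟨?_, by simp [h2], by simp [h3], ?_, ?_⟩
      · apply h1.subset
        intro u hu
        simp only [Function.mem_support] at hu ⊢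
        intro hfu
        apply hu
        split <;> simp_all
      · intro u hu
        beta_reduce
        rcases eq_or_ne u 1 with rfl | hu1
        · have := h4 1 le_rfl
          have hx : f (1 + 1) = f 2 := rfl
          norm_num
          omega
        · rw [if_neg hu1, if_neg (by omega : u + 1 ≠ 1)]
          exact h4 u hu
      · intro u hu he
        beta_reduce at he ⊢
        rcases eq_or_ne u 1 with rfl | hu1
        · exfalso
          norm_num at he
          have := h4 1 le_rfl
          have hx : f (1 + 1) = f 2 := rfl
          omega
        · rw [if_neg hu1, if_neg (by omega : u + 1 ≠ 1)] at he ⊢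
          exact h5 u hu he
    · -- InjOn
      intro f hf f' hf' heq
      rw [key1] at hf hf'
      funext u
      have := congrFun heq u
      rcases eq_or_ne u 1 with rfl | hu1
      · rw [hf.2.2.1, hf'.2.2.1]
      · simpa only [if_neg hu1] using this
    · -- SurjOn
      intro g hg
      rw [key2] at hg
      obtain ⟨h1, h2, h3, h4, h5⟩ := hg
      refine ⟨fun u => if u = 1 then g 1 + 1 else g u, ?_, ?_⟩
      · rw [key1]
        refine ⟨?_, by simp [h2], by simp; omega, ?_, ?_⟩
        · apply (h1.union (Set.finite_singleton 1)).subset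
          intro u hu
          simp only [Function.mem_support, Set.mem_union, Set.mem_singleton_iff] at hu ⊢
          rcases eq_or_ne u 1 with rfl | hu1
          · right; rfl
          · left; rwa [if_neg hu1] at hu
        · intro u hu
          beta_reduce
          rcases eq_or_ne u 1 with rfl | hu1
          · norm_num
            by_contra hcon
            have hb := h4 1 le_rfl
            have hx0 : g (1 + 1) = g 2 := rfl
            have heq' : g 1 + g (1 + 1) = r - 1 := by omega
            have := h5 1 le_rfl heq'
            push_cast at this
            have hx : g (1 + 1) = g 2 := rfl
            omega
          · rw [if_neg hu1, if_neg (by omega : u + 1 ≠ 1)]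
            exact h4 u hu
        · intro u hu he
          beta_reduce at he ⊢
          rcases eq_or_ne u 1 with rfl | hu1
          · norm_num at he ⊢
            push_cast
            omega
          · rw [if_neg hu1, if_neg (by omega : u + 1 ≠ 1)] at he ⊢
            exact h5 u hu he
      · funext u
        rcases eq_or_ne u 1 with rfl | hu1
        · simp
        · simp [hu1]
  · -- weight
    intro f hf
    rw [key1] at hf
    obtain ⟨h1, h2, h3, h4, h5⟩ := hf
    have hpt : ∀ u : ℕ, u * f u =
        u * (if u = 1 then f 1 - 1 else f u) + (if u = 1 then 1 else 0) := by
      intro u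
      rcases eq_or_ne u 1 with rfl | hu1
      · simp; omega
      · simp [hu1]
    have hA : (Function.support fun u : ℕ => u * (if u = 1 then f 1 - 1 else f u)).Finite := by
      apply (h1.union (Set.finite_singleton 1)).subset
      intro u hu
      simp only [Function.mem_support, Set.mem_union, Set.mem_singleton_iff] at hu ⊢
      rcases eq_or_ne u 1 with rfl | hu1
      · right; rfl
      · rw [if_neg hu1] at hu
        left
        intro hfu
        simp [hfu] at hu
    have hB : (Function.support fun u : ℕ => if u = 1 then (1 : ℕ) else 0).Finite := by
      apply (Set.finite_singleton 1).subset
      intro u hu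
      simp only [Function.mem_support] at hu
      by_contra h
      rw [if_neg (by simpa using h)] at hu
      exact hu rfl
    calc (∑ᶠ u : ℕ, u * (if u = 1 then f 1 - 1 else f u)) + 1
        = (∑ᶠ u : ℕ, u * (if u = 1 then f 1 - 1 else f u)) +
          ∑ᶠ u : ℕ, (if u = 1 then (1 : ℕ) else 0) := by
          rw [finsum_eq_single (fun u : ℕ => if u = 1 then (1 : ℕ) else 0) 1
            (fun x hx => by simp [hx])]
          norm_num
      _ = ∑ᶠ u : ℕ, (u * (if u = 1 then f 1 - 1 else f u) + (if u = 1 then (1 : ℕ) else 0)) :=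
          (finsum_add_distrib hA hB).symm
      _ = ∑ᶠ u : ℕ, u * f u := finsum_congr fun u => (hpt u).symm
end

section
/- Let r ≥ 2 and s_1 ≥ s_2 ≥ ... ≥ s_{r-1} ≥ 0 be integers, with s_r = 0. Let μ(s_1, ..., s_{r-1}) be the partition with multiplicity sequence (f_u)_{u≥0} defined by (f_{2u}, f_{2u+1}) = (j, 0) for all s_{j+1} ≤ u < s_j, for each j ∈ {0, ..., r-1} (where s_0 = ∞), and f_u = 0 for u ≥ 2s_1. Then the number of parts of μ(s_1, ..., s_{r-1}) equals s_1 + s_2 + ... + s_{r-1}, and its weight equals s_1² + s_2² + ... + s_{r-1}² - s_1 - s_2 - ... - s_{r-1}. -/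
private lemma sum_pair (g : ℕ → ℕ) (n : ℕ) :
    ∑ u ∈ Finset.range (2 * n), g u = ∑ u ∈ Finset.range n, (g (2 * u) + g (2 * u + 1)) := by
  induction n with
  | zero => simp
  | succ n ih =>
    have h2 : 2 * (n + 1) = 2 * n + 1 + 1 := by ring
    rw [h2, Finset.sum_range_succ, Finset.sum_range_succ, ih, Finset.sum_range_succ]
    omega

/-- the partition `μ(s_1,…,s_{r-1})`, described by its multiplicity
sequence `f` ( `(f_{2u}, f_{2u+1}) = (j,0)` for `s_{j+1} ≤ u < s_j`, with `s_0 = ∞`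
handled by the case `j = 0` for `u ≥ s_1` ), has `s_1 + ⋯ + s_{r-1}` parts and weight
`s_1² + ⋯ + s_{r-1}² - s_1 - ⋯ - s_{r-1}`. -/
theorem stmt_6 (r : ℕ) (hr : 2 ≤ r) (s : ℕ → ℕ)
    (hmono : ∀ j, 1 ≤ j → j < r → s (j + 1) ≤ s j) (hsr : s r = 0)
    (f : ℕ → ℕ)
    (hpos : ∀ j, 1 ≤ j → j ≤ r - 1 → ∀ u, s (j + 1) ≤ u → u < s j →
      f (2 * u) = j ∧ f (2 * u + 1) = 0)
    (hzero : ∀ u, s 1 ≤ u → f (2 * u) = 0 ∧ f (2 * u + 1) = 0) :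
    (∑ᶠ u : ℕ, f u) = (∑ j ∈ Finset.Icc 1 (r - 1), s j) ∧
    (∑ᶠ u : ℕ, u * f u) = ∑ j ∈ Finset.Icc 1 (r - 1), (s j ^ 2 - s j) := by
  -- antitonicity of s on [1, r]
  have hanti : ∀ a b, 1 ≤ a → a ≤ b → b ≤ r → s b ≤ s a := by
    intro a b ha hab hbr
    induction b with
    | zero => omega
    | succ n ih =>
      rcases Nat.eq_or_lt_of_le hab with h | h
      · rw [h]
      · exact le_trans (hmono n (by omega) (by omega)) (ih (by omega) (by omega))
  -- key description of f
  have key : ∀ u, f (2 * u) = ((Finset.Icc 1 (r - 1)).filter (fun j => u < s j)).card ∧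
      f (2 * u + 1) = 0 := by
    intro u
    by_cases hu : s 1 ≤ u
    · have hempty : ((Finset.Icc 1 (r - 1)).filter (fun j => u < s j)) = ∅ := by
        apply Finset.filter_eq_empty_iff.2
        intro j hj
        simp only [Finset.mem_Icc] at hj
        have := hanti 1 j (le_refl 1) hj.1 (by omega)
        omega
      rw [hempty]
      simpa using hzero u hu
    · push_neg at hu
      set j := Nat.findGreatest (fun j => u < s j) (r - 1) with hjdef
      have hj1 : 1 ≤ j := Nat.le_findGreatest (by omega) hu
      have hjle : j ≤ r - 1 := Nat.findGreatest_le _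
      have hPj : u < s j := Nat.findGreatest_spec (P := fun j => u < s j) (by omega : 1 ≤ r - 1) hu
      have hPj1 : s (j + 1) ≤ u := by
        by_cases h : j + 1 ≤ r - 1
        · have := Nat.findGreatest_is_greatest (P := fun j => u < s j)
            (n := r - 1) (k := j + 1) (by omega) h
          omega
        · have hj1r : j + 1 = r := by omega
          rw [hj1r, hsr]; omega
      obtain ⟨h1, h2⟩ := hpos j hj1 hjle u hPj1 hPj
      refine ⟨?_, h2⟩
      have hfe : ((Finset.Icc 1 (r - 1)).filter (fun j' => u < s j')) = Finset.Icc 1 j := by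
        ext j'
        simp only [Finset.mem_filter, Finset.mem_Icc]
        constructor
        · rintro ⟨⟨ha, hb⟩, hc⟩
          refine ⟨ha, ?_⟩
          by_contra hgt
          exact Nat.findGreatest_is_greatest (P := fun j => u < s j) (n := r - 1)
            (by omega) hb hc
        · rintro ⟨ha, hb⟩
          exact ⟨⟨ha, by omega⟩, lt_of_lt_of_le hPj (hanti j' j ha hb (by omega))⟩
      rw [hfe, h1, Nat.card_Icc]
      omega
  -- support of f is contained in range (2 * s 1)
  have hsupp : ∀ (g : ℕ → ℕ), (∀ n, g n ≠ 0 → f n ≠ 0) →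
      Function.support g ⊆ (Finset.range (2 * s 1) : Finset ℕ) := by
    intro g hg n hn
    simp only [Finset.coe_range, Set.mem_Iio]
    have hfn : f n ≠ 0 := hg n hn
    rcases Nat.even_or_odd n with ⟨u, hu⟩ | ⟨u, hu⟩
    · subst hu
      have := (key u).1
      by_contra hge
      push_neg at hge
      have hu1 : s 1 ≤ u := by omega
      have h2 : u + u = 2 * u := by omega
      rw [h2] at hfn
      exact hfn ((hzero u hu1).1)
    · exfalso
      exact hfn (by rw [hu]; exact (key u).2)
  -- reduce finsums to finite sums
  have e1 : (∑ᶠ u : ℕ, f u) = ∑ u ∈ Finset.range (2 * s 1), f u :=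
    finsum_eq_finset_sum_of_support_subset f (hsupp f (fun n h => h))
  have e2 : (∑ᶠ u : ℕ, u * f u) = ∑ u ∈ Finset.range (2 * s 1), u * f u :=
    finsum_eq_finset_sum_of_support_subset _ (hsupp (fun u => u * f u)
      (fun n h => by intro hf; apply h; simp [hf]))
  have hcard : ∀ j ∈ Finset.Icc 1 (r - 1),
      ((Finset.range (s 1)).filter (fun u => u < s j)).card = s j := by
    intro j hj
    simp only [Finset.mem_Icc] at hj
    have hle : s j ≤ s 1 := hanti 1 j le_rfl hj.1 (by omega)
    have : ((Finset.range (s 1)).filter (fun u => u < s j)) = Finset.range (s j) := by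
      ext u
      simp only [Finset.mem_filter, Finset.mem_range]
      omega
    rw [this, Finset.card_range]
  constructor
  · rw [e1, sum_pair]
    have : ∀ u ∈ Finset.range (s 1), f (2 * u) + f (2 * u + 1) =
        ∑ j ∈ Finset.Icc 1 (r - 1), (if u < s j then 1 else 0) := by
      intro u _
      rw [(key u).1, (key u).2, add_zero, Finset.card_filter]
    rw [Finset.sum_congr rfl this, Finset.sum_comm]
    refine Finset.sum_congr rfl fun j hj => ?_
    rw [← Finset.card_filter]
    exact hcard j hj
  · rw [e2, sum_pair]
    have : ∀ u ∈ Finset.range (s 1), (2 * u) * f (2 * u) + (2 * u + 1) * f (2 * u + 1) =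
        ∑ j ∈ Finset.Icc 1 (r - 1), (if u < s j then 2 * u else 0) := by
      intro u _
      rw [(key u).1, (key u).2, mul_zero, add_zero, Finset.card_filter, Finset.mul_sum]
      refine Finset.sum_congr rfl fun j _ => ?_
      split_ifs <;> simp
    rw [Finset.sum_congr rfl this, Finset.sum_comm]
    refine Finset.sum_congr rfl fun j hj => ?_
    simp only [Finset.mem_Icc] at hj
    have hle : s j ≤ s 1 := hanti 1 j le_rfl hj.1 (by omega)
    rw [← Finset.sum_filter]
    have hfil : ((Finset.range (s 1)).filter (fun u => u < s j)) = Finset.range (s j) := by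
      ext u
      simp only [Finset.mem_filter, Finset.mem_range]
      omega
    rw [hfil]
    have hgauss : (∑ u ∈ Finset.range (s j), u) * 2 = s j * (s j - 1) :=
      Finset.sum_range_id_mul_two (s j)
    have : ∑ u ∈ Finset.range (s j), 2 * u = (∑ u ∈ Finset.range (s j), u) * 2 := by
      rw [Finset.sum_mul]
      exact Finset.sum_congr rfl fun u _ => by ring
    rw [this, hgauss, ← Nat.pred_eq_sub_one, Nat.mul_pred, pow_two]
end

section
/- Fix r ≥ 2, integers s_1 ≥ ... ≥ s_{r-1} ≥ 0 (s_0 = ∞, s_r = 0), and λ ∈ P(s_1,...,s_{r-1}). Define g_u for u ≥ 0 as the unique j ∈ {0,...,r-1} with s_{j+1} ≤ u < s_j. Let θ^{(s_1)} be the multiplicity sequence of μ(s_1,...,s_{r-1}), and for u from s_1 - 1 down to 0 define n_u := min{t ≥ 2u+2 : Σ_{j=2u+2}^{t} [g_u - (θ_j^{(u+1)} + θ_{j-1}^{(u+1)})] ≥ λ_u} and θ^{(u)} by: θ_j^{(u)} = θ_j^{(u+1)} for j < 2u or j ≥ n_u; θ_j^{(u)} = θ_{j+2}^{(u+1)} for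 2u ≤ j < n_u - 2; and θ_{n_u-1}^{(u)} = θ_{n_u-1}^{(u+1)} + λ_u - Σ_{j=2u+2}^{n_u-1}[g_u - (θ_j^{(u+1)} + θ_{j-1}^{(u+1)})], θ_{n_u-2}^{(u)} = g_u - θ_{n_u-1}^{(u)}. Then for every u ∈ {0, ..., s_1}: (1) θ_j^{(u)} = θ_j^{(s_1)} for all 1 ≤ j < 2u; (2) θ_j^{(u)} ≥ 0 for all j ≥ 0; and (3) g_u ≥ θ_j^{(u)} + θ_{j+1}^{(u)} for all j ≥ 2u. -/
/-- properties of the intermediate sequences `θ^{(u)}` in the insertion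
map `Λ`. The data `s, λ, g, n, θ` are axiomatized by hypotheses expressing their defining
equations. Conclusions, for all `0 ≤ u ≤ s_1`: (1) `θ_j^{(u)} = θ_j^{(s_1)}` for
`1 ≤ j < 2u`; (2) `θ_j^{(u)} ≥ 0`; (3) `g_u ≥ θ_j^{(u)} + θ_{j+1}^{(u)}` for `j ≥ 2u`. -/
theorem stmt_11 (r : ℕ) (hr : 2 ≤ r)
    (s : ℕ → ℕ) (hs : ∀ j, 1 ≤ j → j < r → s (j + 1) ≤ s j) (hsr : s r = 0)
    (lam : ℕ → ℕ)
    (hlam : ∀ j, 1 ≤ j → j < r → ∀ u, s (j + 1) ≤ u → u + 1 < s j → lam u ≤ lam (u + 1))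
    (g : ℕ → ℕ)
    (hg : ∀ u, g u ≤ r - 1 ∧ s (g u + 1) ≤ u ∧ (1 ≤ g u → u < s (g u)))
    (θ : ℕ → ℕ → ℤ)
    (hbase : ∀ u, θ (s 1) (2 * u) = (g u : ℤ) ∧ θ (s 1) (2 * u + 1) = 0)
    (n : ℕ → ℕ)
    (hn : ∀ u, u < s 1 →
      2 * u + 2 ≤ n u ∧
      (lam u : ℤ) ≤ ∑ j ∈ Finset.Icc (2 * u + 2) (n u),
        ((g u : ℤ) - (θ (u + 1) j + θ (u + 1) (j - 1))) ∧
      ∀ t, 2 * u + 2 ≤ t → t < n u →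
        (∑ j ∈ Finset.Icc (2 * u + 2) t,
          ((g u : ℤ) - (θ (u + 1) j + θ (u + 1) (j - 1)))) < (lam u : ℤ))
    (hθ : ∀ u, u < s 1 →
      (∀ j, j < 2 * u ∨ n u ≤ j → θ u j = θ (u + 1) j) ∧
      (∀ j, 2 * u ≤ j → j + 2 < n u → θ u j = θ (u + 1) (j + 2)) ∧
      θ u (n u - 1) = θ (u + 1) (n u - 1) + (lam u : ℤ) -
        ∑ j ∈ Finset.Icc (2 * u + 2) (n u - 1),
          ((g u : ℤ) - (θ (u + 1) j + θ (u + 1) (j - 1))) ∧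
      θ u (n u - 2) = (g u : ℤ) - θ u (n u - 1)) :
    ∀ u, u ≤ s 1 →
      (∀ j, 1 ≤ j → j < 2 * u → θ u j = θ (s 1) j) ∧
      (∀ j, 0 ≤ θ u j) ∧
      (∀ j, 2 * u ≤ j → θ u j + θ u (j + 1) ≤ (g u : ℤ)) := by
  -- s is antitone on [1, r]
  have smono : ∀ b a, 1 ≤ a → a ≤ b → b ≤ r → s b ≤ s a := by
    intro b
    induction b with
    | zero => intro a ha hab _; omega
    | succ m ih =>
      intro a ha hab hbr
      rcases Nat.lt_or_ge a (m + 1) with h | h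
      · exact le_trans (hs m (by omega) (by omega)) (ih a ha (by omega) (by omega))
      · have : a = m + 1 := by omega
        rw [this]
  -- g is antitone
  have gmono : ∀ u v, u ≤ v → g v ≤ g u := by
    intro u v huv
    by_contra h
    push_neg at h
    have h1 := hg u
    have h2 := hg v
    have hv : v < s (g v) := h2.2.2 (by omega)
    have hle : s (g v) ≤ s (g u + 1) := smono (g v) (g u + 1) (by omega) (by omega) (by omega)
    have := h1.2.1
    omega
  have main : ∀ d u, u ≤ s 1 → s 1 - u = d →
      ((∀ j, 1 ≤ j → j < 2 * u → θ u j = θ (s 1) j) ∧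
      (∀ j, 0 ≤ θ u j) ∧
      (∀ j, 2 * u ≤ j → θ u j + θ u (j + 1) ≤ (g u : ℤ))) := by
    intro d
    induction d with
    | zero =>
      intro u hu hd
      have hus : u = s 1 := by omega
      subst hus
      refine ⟨fun j _ _ => rfl, ?_, ?_⟩
      · intro j
        obtain ⟨k, hk | hk⟩ := Nat.even_or_odd' j
        · rw [hk, (hbase k).1]; exact Int.ofNat_nonneg _
        · rw [hk, (hbase k).2]
      · intro j hj
        obtain ⟨k, hk | hk⟩ := Nat.even_or_odd' j
        · rw [hk, (hbase k).1, (hbase k).2]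
          have : g k ≤ g (s 1) := gmono (s 1) k (by omega)
          omega
        · rw [hk, show 2 * k + 1 + 1 = 2 * (k + 1) by ring, (hbase k).2, (hbase (k + 1)).1]
          have : g (k + 1) ≤ g (s 1) := gmono (s 1) (k + 1) (by omega)
          omega
    | succ d ih =>
      intro u hu hd
      have hu' : u < s 1 := by omega
      obtain ⟨ih1, ih2, ih3⟩ := ih (u + 1) (by omega) (by omega)
      obtain ⟨hθ1, hθ2, hθ3, hθ4⟩ := hθ u hu'
      obtain ⟨hn1, hn2, hn3⟩ := hn u hu'
      set N := n u with hN
      have hsum : (∑ j ∈ Finset.Icc (2 * u + 2) N,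
            ((g u : ℤ) - (θ (u + 1) j + θ (u + 1) (j - 1))))
          = (∑ j ∈ Finset.Icc (2 * u + 2) (N - 1),
            ((g u : ℤ) - (θ (u + 1) j + θ (u + 1) (j - 1))))
            + ((g u : ℤ) - (θ (u + 1) N + θ (u + 1) (N - 1))) := by
        have hins : Finset.Icc (2 * u + 2) N = insert N (Finset.Icc (2 * u + 2) (N - 1)) := by
          ext x
          simp only [Finset.mem_Icc, Finset.mem_insert]
          omega
        rw [hins, Finset.sum_insert (by simp only [Finset.mem_Icc]; omega)]
        ring
      have hA1 : (lam u : ℤ) ≤ (∑ j ∈ Finset.Icc (2 * u + 2) (N - 1),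
            ((g u : ℤ) - (θ (u + 1) j + θ (u + 1) (j - 1))))
            + ((g u : ℤ) - (θ (u + 1) N + θ (u + 1) (N - 1))) := by
        rw [← hsum]; exact hn2
      have hA0 : (∑ j ∈ Finset.Icc (2 * u + 2) (N - 1),
            ((g u : ℤ) - (θ (u + 1) j + θ (u + 1) (j - 1)))) ≤ (lam u : ℤ) := by
        rcases Nat.lt_or_ge (N - 1) (2 * u + 2) with h | h
        · rw [Finset.Icc_eq_empty (by omega), Finset.sum_empty]
          exact Int.ofNat_nonneg _
        · exact le_of_lt (hn3 (N - 1) h (by omega))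
      have hgm : (g (u + 1) : ℤ) ≤ (g u : ℤ) := by
        exact_mod_cast gmono u (u + 1) (by omega)
      refine ⟨?_, ?_, ?_⟩
      · intro j hj1 hj2
        rw [hθ1 j (Or.inl hj2)]
        exact ih1 j hj1 (by omega)
      · intro j
        rcases Nat.lt_or_ge j (2 * u) with h1 | h1
        · rw [hθ1 j (Or.inl h1)]; exact ih2 j
        rcases Nat.lt_or_ge j N with h2 | h2
        swap
        · rw [hθ1 j (Or.inr h2)]; exact ih2 j
        rcases Nat.lt_or_ge (j + 2) N with h3 | h3
        · rw [hθ2 j h1 h3]; exact ih2 (j + 2)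
        have hcase : j = N - 1 ∨ j = N - 2 := by omega
        rcases hcase with hje | hje
        · rw [hje, hθ3]
          have := ih2 (N - 1)
          have hl : (0 : ℤ) ≤ (lam u : ℤ) := Int.ofNat_nonneg _
          linarith [hA0]
        · rw [hje, hθ4, hθ3]
          have := ih2 N
          linarith [hA1]
      · intro j hj
        rcases Nat.lt_or_ge j N with h2 | h2
        swap
        · rw [hθ1 j (Or.inr h2), hθ1 (j + 1) (Or.inr (by omega))]
          have := ih3 j (by omega)
          linarith
        rcases Nat.lt_or_ge (j + 3) N with h1 | h1
        · rw [hθ2 j hj (by omega), hθ2 (j + 1) (by omega) (by omega)]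
          have := ih3 (j + 2) (by omega)
          linarith
        have hcase : j + 3 = N ∨ j = N - 2 ∨ j = N - 1 := by omega
        rcases hcase with hje | hje | hje
        · rw [hθ2 j hj (by omega), show j + 2 = N - 1 by omega, show j + 1 = N - 2 by omega,
            hθ4, hθ3]
          linarith [hA0]
        · rw [hje, show N - 2 + 1 = N - 1 by omega, hθ4]
          linarith
        · rw [hje, show N - 1 + 1 = N by omega, hθ1 N (Or.inr le_rfl), hθ3]
          linarith [hA1]
  exact fun u hu => main (s 1 - u) u hu rfl
end

section
/- In the setting of the insertion map Λ (with g_u, n_u, and the sequences θ^{(u)} as defined), for every u ∈ {0, ..., s_1 - 1}: (1) (θ_{2u}^{(u+1)}, θ_{2u+1}^{(u+1)}) = (g_u, 0); (2) Σ_{j≥0} θ_j^{(u)} = Σ_{j≥0} θ_j^{(u+1)}; and (3) Σ_{j≥0} j·θ_j^{(u)} = λ_u + Σ_{j≥0} j·θ_j^{(u+1)}. -/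
lemma stmt12_decbot (f : ℕ → ℤ) (a c p : ℕ) (h : a < c) (hp : p = a + 1) :
    ∑ j ∈ Finset.Ico a c, f j = f a + ∑ j ∈ Finset.Ico p c, f j := by
  subst hp; exact Finset.sum_eq_sum_Ico_succ_bot h f

lemma stmt12_dectop (f : ℕ → ℤ) (a c p : ℕ) (h : a + 1 ≤ c) (hp : p = c - 1) :
    ∑ j ∈ Finset.Ico a c, f j = (∑ j ∈ Finset.Ico a p, f j) + f p := by
  subst hp
  obtain ⟨k, rfl⟩ : ∃ k, c = a + k + 1 := ⟨c - a - 1, by omega⟩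
  rw [show a + k + 1 - 1 = a + k by omega]
  exact Finset.sum_Ico_succ_top (by omega) f

lemma stmt12_dec2top (f : ℕ → ℤ) (a c p q : ℕ) (h : a + 2 ≤ c) (hp : p = c - 2)
    (hq : q = c - 1) :
    ∑ j ∈ Finset.Ico a c, f j = (∑ j ∈ Finset.Ico a p, f j) + f p + f q := by
  rw [stmt12_dectop f a c q (by omega) hq, stmt12_dectop f a q p (by omega) (by omega)]

lemma stmt12_dec2bot (f : ℕ → ℤ) (a c p q : ℕ) (h : a + 2 ≤ c) (hp : p = a + 1)
    (hq : q = a + 2) :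
    ∑ j ∈ Finset.Ico a c, f j = f a + f p + ∑ j ∈ Finset.Ico q c, f j := by
  rw [stmt12_decbot f a c p (by omega) hp, stmt12_decbot f p c q (by omega) (by omega)]
  ring

lemma stmt12_shiftup2 (f : ℕ → ℤ) (a b a' b' : ℕ) (ha : a' = a + 2) (hb : b' = b + 2) :
    ∑ j ∈ Finset.Ico a b, f (j + 2) = ∑ j ∈ Finset.Ico a' b', f j := by
  subst ha hb
  rw [Finset.sum_Ico_eq_sum_range, Finset.sum_Ico_eq_sum_range]
  rw [show b + 2 - (a + 2) = b - a by omega]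
  exact Finset.sum_congr rfl fun i _ => by congr 1; omega

lemma stmt12_shiftdown1 (f : ℕ → ℤ) (a b x y : ℕ) (ha : a = x + 1) (hb : b = y + 1) :
    ∑ j ∈ Finset.Ico a b, f (j - 1) = ∑ j ∈ Finset.Ico x y, f j := by
  subst ha hb
  rw [Finset.sum_Ico_eq_sum_range, Finset.sum_Ico_eq_sum_range]
  rw [show y + 1 - (x + 1) = y - x by omega]
  exact Finset.sum_congr rfl fun i _ => by congr 1; omega

/-- in the setting of the insertion map `Λ`, for every
`u ∈ {0,…,s_1-1}`: (1) `(θ_{2u}^{(u+1)}, θ_{2u+1}^{(u+1)}) = (g_u, 0)`;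
(2) the total multiplicity is preserved; (3) the weight increases by exactly `λ_u`. -/
theorem stmt_12 (r : ℕ) (hr : 2 ≤ r)
    (s : ℕ → ℕ) (hs : ∀ j, 1 ≤ j → j < r → s (j + 1) ≤ s j) (hsr : s r = 0)
    (lam : ℕ → ℕ)
    (hlam : ∀ j, 1 ≤ j → j < r → ∀ u, s (j + 1) ≤ u → u + 1 < s j → lam u ≤ lam (u + 1))
    (g : ℕ → ℕ)
    (hg : ∀ u, g u ≤ r - 1 ∧ s (g u + 1) ≤ u ∧ (1 ≤ g u → u < s (g u)))
    (θ : ℕ → ℕ → ℤ)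
    (hbase : ∀ u, θ (s 1) (2 * u) = (g u : ℤ) ∧ θ (s 1) (2 * u + 1) = 0)
    (n : ℕ → ℕ)
    (hn : ∀ u, u < s 1 →
      2 * u + 2 ≤ n u ∧
      (lam u : ℤ) ≤ ∑ j ∈ Finset.Icc (2 * u + 2) (n u),
        ((g u : ℤ) - (θ (u + 1) j + θ (u + 1) (j - 1))) ∧
      ∀ t, 2 * u + 2 ≤ t → t < n u →
        (∑ j ∈ Finset.Icc (2 * u + 2) t,
          ((g u : ℤ) - (θ (u + 1) j + θ (u + 1) (j - 1)))) < (lam u : ℤ))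
    (hθ : ∀ u, u < s 1 →
      (∀ j, j < 2 * u ∨ n u ≤ j → θ u j = θ (u + 1) j) ∧
      (∀ j, 2 * u ≤ j → j + 2 < n u → θ u j = θ (u + 1) (j + 2)) ∧
      θ u (n u - 1) = θ (u + 1) (n u - 1) + (lam u : ℤ) -
        ∑ j ∈ Finset.Icc (2 * u + 2) (n u - 1),
          ((g u : ℤ) - (θ (u + 1) j + θ (u + 1) (j - 1))) ∧
      θ u (n u - 2) = (g u : ℤ) - θ u (n u - 1)) :
    ∀ u, u < s 1 →
      (θ (u + 1) (2 * u) = (g u : ℤ) ∧ θ (u + 1) (2 * u + 1) = 0) ∧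
      (∑ᶠ j : ℕ, θ u j) = (∑ᶠ j : ℕ, θ (u + 1) j) ∧
      (∑ᶠ j : ℕ, (j : ℤ) * θ u j) = (lam u : ℤ) + ∑ᶠ j : ℕ, (j : ℤ) * θ (u + 1) j := by
  -- s is bounded by s 1 on [1, r]
  have smono : ∀ j, 1 ≤ j → j ≤ r → s j ≤ s 1 := by
    intro j
    induction j with
    | zero => omega
    | succ j ih =>
      intro _ h2
      rcases Nat.eq_zero_or_pos j with hj | hj
      · subst hj; exact le_rfl
      · exact le_trans (hs j hj (by omega)) (ih hj (by omega))
  have g0 : ∀ u, s 1 ≤ u → g u = 0 := by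
    intro u hu
    by_contra h
    have h1 : 1 ≤ g u := by omega
    have h2 := (hg u).2.2 h1
    have h3 : s (g u) ≤ s 1 := smono _ h1 (by have := (hg u).1; omega)
    omega
  -- part (1): positions below 2v are untouched
  have part1 : ∀ k v u, s 1 - v ≤ k → u < v → v ≤ s 1 →
      θ v (2 * u) = (g u : ℤ) ∧ θ v (2 * u + 1) = 0 := by
    intro k
    induction k with
    | zero =>
      intro v u h1 h2 h3
      have hv : v = s 1 := by omega
      subst hv; exact hbase u
    | succ k ih =>
      intro v u h1 h2 h3
      rcases eq_or_lt_of_le h3 with he | hl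
      · subst he; exact hbase u
      · have h := (hθ v hl).1
        exact ⟨by rw [h (2 * u) (Or.inl (by omega))];
                  exact (ih (v + 1) u (by omega) (by omega) hl).1,
               by rw [h (2 * u + 1) (Or.inl (by omega))];
                  exact (ih (v + 1) u (by omega) (by omega) hl).2⟩
  -- finite support
  have fin : ∀ k v, s 1 - v ≤ k → v ≤ s 1 → ∃ N, ∀ j, N ≤ j → θ v j = 0 := by
    intro k
    induction k with
    | zero =>
      intro v h1 h3
      have hv : v = s 1 := by omega
      subst hv
      refine ⟨2 * s 1, fun j hj => ?_⟩
      rcases Nat.even_or_odd j with ⟨t, rfl⟩ | ⟨t, rfl⟩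
      · rw [show t + t = 2 * t from by ring, (hbase t).1, g0 t (by omega)]; simp
      · exact (hbase t).2
    | succ k ih =>
      intro v h1 h3
      rcases eq_or_lt_of_le h3 with he | hl
      · subst he
        refine ⟨2 * s 1, fun j hj => ?_⟩
        rcases Nat.even_or_odd j with ⟨t, rfl⟩ | ⟨t, rfl⟩
        · rw [show t + t = 2 * t from by ring, (hbase t).1, g0 t (by omega)]; simp
        · exact (hbase t).2
      · obtain ⟨N, hN⟩ := ih (v + 1) (by omega) hl
        refine ⟨max N (n v), fun j hj => ?_⟩
        rw [(hθ v hl).1 j (Or.inr (by omega))]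
        exact hN j (by omega)
  intro u hu
  have P1 := part1 (s 1) (u + 1) u (by omega) (by omega) hu
  refine ⟨P1, ?_⟩
  obtain ⟨N, hN⟩ := fin (s 1) (u + 1) (by omega) hu
  obtain ⟨m, hm⟩ : ∃ m, n u = 2 * u + 2 + m := ⟨n u - (2 * u + 2), by
    have := (hn u hu).1; omega⟩
  set M := max N (2 * u + 2 + m) with hM
  have hM1 : N ≤ M := le_max_left _ _
  have hM2 : 2 * u + 2 + m ≤ M := le_max_right _ _
  have hθu := hθ u hu
  have E1 : ∀ j, j < 2 * u ∨ 2 * u + 2 + m ≤ j → θ u j = θ (u + 1) j := by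
    intro j hj; exact hθu.1 j (by omega)
  have E2 : ∀ j, 2 * u ≤ j → j < 2 * u + m → θ u j = θ (u + 1) (j + 2) := by
    intro j h1 h2; exact hθu.2.1 j h1 (by omega)
  have e2 : Finset.Icc (2 * u + 2) (n u - 1) = Finset.Ico (2 * u + 2) (2 * u + 2 + m) := by
    rw [← Finset.Ico_add_one_right_eq_Icc]; congr 1; omega
  have E3 : θ u (2 * u + 1 + m) = θ (u + 1) (2 * u + 1 + m) + (lam u : ℤ) -
      ∑ j ∈ Finset.Ico (2 * u + 2) (2 * u + 2 + m),
        ((g u : ℤ) - (θ (u + 1) j + θ (u + 1) (j - 1))) := by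
    have h := hθu.2.2.1
    rw [e2, show n u - 1 = 2 * u + 1 + m by omega] at h
    exact h
  have E4 : θ u (2 * u + m) = (g u : ℤ) - θ u (2 * u + 1 + m) := by
    have h := hθu.2.2.2
    rw [show n u - 2 = 2 * u + m by omega, show n u - 1 = 2 * u + 1 + m by omega] at h
    exact h
  -- rewrite the Σ in E3
  have hsd : ∑ j ∈ Finset.Ico (2 * u + 2) (2 * u + 2 + m), θ (u + 1) (j - 1)
      = ∑ j ∈ Finset.Ico (2 * u + 1) (2 * u + 1 + m), θ (u + 1) j :=
    stmt12_shiftdown1 (θ (u + 1)) _ _ (2 * u + 1) (2 * u + 1 + m) (by omega) (by omega)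
  have hSig : ∑ j ∈ Finset.Ico (2 * u + 2) (2 * u + 2 + m),
      ((g u : ℤ) - (θ (u + 1) j + θ (u + 1) (j - 1)))
      = (m : ℤ) * (g u : ℤ) - (∑ j ∈ Finset.Ico (2 * u + 2) (2 * u + 2 + m), θ (u + 1) j)
        - (∑ j ∈ Finset.Ico (2 * u + 1) (2 * u + 1 + m), θ (u + 1) j) := by
    rw [Finset.sum_sub_distrib, Finset.sum_add_distrib, Finset.sum_const, Nat.card_Ico,
      show 2 * u + 2 + m - (2 * u + 2) = m by omega, hsd]
    push_cast
    ring
  rw [hSig] at E3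
  -- T/S endpoint relation
  have t1 := stmt12_dectop (θ (u + 1)) (2 * u + 1) (2 * u + 2 + m) (2 * u + 1 + m)
    (by omega) (by omega)
  have t2 := stmt12_decbot (θ (u + 1)) (2 * u + 1) (2 * u + 2 + m) (2 * u + 2)
    (by omega) (by omega)
  have TmS : (∑ j ∈ Finset.Ico (2 * u + 1) (2 * u + 1 + m), θ (u + 1) j)
      + θ (u + 1) (2 * u + 1 + m)
      = θ (u + 1) (2 * u + 1) + ∑ j ∈ Finset.Ico (2 * u + 2) (2 * u + 2 + m), θ (u + 1) j := by
    linarith [t1, t2]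
  rw [P1.2] at TmS
  -- support facts
  have hsup1 : Function.support (θ u) ⊆ ↑(Finset.range M) := by
    intro j hj
    simp only [Function.mem_support] at hj
    simp only [Finset.coe_range, Set.mem_Iio]
    by_contra hc
    exact hj (by rw [E1 j (by omega)]; exact hN j (by omega))
  have hsup2 : Function.support (θ (u + 1)) ⊆ ↑(Finset.range M) := by
    intro j hj
    simp only [Function.mem_support] at hj
    simp only [Finset.coe_range, Set.mem_Iio]
    by_contra hc
    exact hj (hN j (by omega))
  have hsup1' : Function.support (fun j : ℕ => (j : ℤ) * θ u j) ⊆ ↑(Finset.range M) := by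
    intro j hj
    apply hsup1
    simp only [Function.mem_support] at hj ⊢
    intro h; exact hj (by rw [h, mul_zero])
  have hsup2' : Function.support (fun j : ℕ => (j : ℤ) * θ (u + 1) j) ⊆ ↑(Finset.range M) := by
    intro j hj
    apply hsup2
    simp only [Function.mem_support] at hj ⊢
    intro h; exact hj (by rw [h, mul_zero])
  have split : ∀ f : ℕ → ℤ, ∑ j ∈ Finset.range M, f j
      = (∑ j ∈ Finset.Ico 0 (2 * u), f j) + (∑ j ∈ Finset.Ico (2 * u) (2 * u + 2 + m), f j)
        + (∑ j ∈ Finset.Ico (2 * u + 2 + m) M, f j) := by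
    intro f
    rw [Finset.range_eq_Ico, ← Finset.sum_Ico_consecutive f (Nat.zero_le (2 * u + 2 + m)) hM2,
      ← Finset.sum_Ico_consecutive f (Nat.zero_le (2 * u)) (by omega)]
  constructor
  · -- total multiplicity preserved
    rw [finsum_eq_finset_sum_of_support_subset _ hsup1,
      finsum_eq_finset_sum_of_support_subset _ hsup2, split (θ u), split (θ (u + 1))]
    have outer1 : ∑ j ∈ Finset.Ico 0 (2 * u), θ u j = ∑ j ∈ Finset.Ico 0 (2 * u), θ (u + 1) j :=
      Finset.sum_congr rfl fun j hj => E1 j (Or.inl (Finset.mem_Ico.mp hj).2)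
    have outer2 : ∑ j ∈ Finset.Ico (2 * u + 2 + m) M, θ u j
        = ∑ j ∈ Finset.Ico (2 * u + 2 + m) M, θ (u + 1) j :=
      Finset.sum_congr rfl fun j hj => E1 j (Or.inr (Finset.mem_Ico.mp hj).1)
    have hmidL : ∑ j ∈ Finset.Ico (2 * u) (2 * u + m), θ u j
        = ∑ j ∈ Finset.Ico (2 * u + 2) (2 * u + 2 + m), θ (u + 1) j := by
      rw [← stmt12_shiftup2 (θ (u + 1)) (2 * u) (2 * u + m) (2 * u + 2) (2 * u + 2 + m)
        (by omega) (by omega)]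
      exact Finset.sum_congr rfl fun j hj => by
        have := Finset.mem_Ico.mp hj
        exact E2 j this.1 this.2
    have midA : ∑ j ∈ Finset.Ico (2 * u) (2 * u + 2 + m), θ u j
        = ∑ j ∈ Finset.Ico (2 * u) (2 * u + 2 + m), θ (u + 1) j := by
      rw [stmt12_dec2top (θ u) (2 * u) (2 * u + 2 + m) (2 * u + m) (2 * u + 1 + m)
          (by omega) (by omega) (by omega),
        stmt12_dec2bot (θ (u + 1)) (2 * u) (2 * u + 2 + m) (2 * u + 1) (2 * u + 2)
          (by omega) rfl rfl,
        hmidL, P1.1, P1.2, E4]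
      ring
    rw [outer1, outer2, midA]
  · -- weight increases by lam u
    rw [finsum_eq_finset_sum_of_support_subset _ hsup1',
      finsum_eq_finset_sum_of_support_subset _ hsup2',
      split (fun j : ℕ => (j : ℤ) * θ u j), split (fun j : ℕ => (j : ℤ) * θ (u + 1) j)]
    have outer1 : ∑ j ∈ Finset.Ico 0 (2 * u), (j : ℤ) * θ u j
        = ∑ j ∈ Finset.Ico 0 (2 * u), (j : ℤ) * θ (u + 1) j :=
      Finset.sum_congr rfl fun j hj => by rw [E1 j (Or.inl (Finset.mem_Ico.mp hj).2)]
    have outer2 : ∑ j ∈ Finset.Ico (2 * u + 2 + m) M, (j : ℤ) * θ u j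
        = ∑ j ∈ Finset.Ico (2 * u + 2 + m) M, (j : ℤ) * θ (u + 1) j :=
      Finset.sum_congr rfl fun j hj => by rw [E1 j (Or.inr (Finset.mem_Ico.mp hj).1)]
    have hmidL : ∑ j ∈ Finset.Ico (2 * u) (2 * u + m), (j : ℤ) * θ u j
        = ∑ j ∈ Finset.Ico (2 * u + 2) (2 * u + 2 + m), ((j : ℤ) - 2) * θ (u + 1) j := by
      rw [← stmt12_shiftup2 (fun j : ℕ => ((j : ℤ) - 2) * θ (u + 1) j) (2 * u) (2 * u + m)
        (2 * u + 2) (2 * u + 2 + m) (by omega) (by omega)]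
      refine Finset.sum_congr rfl fun j hj => ?_
      have hb := Finset.mem_Ico.mp hj
      rw [E2 j hb.1 hb.2]
      push_cast
      ring
    have hS2 : ∑ j ∈ Finset.Ico (2 * u + 2) (2 * u + 2 + m), ((j : ℤ) - 2) * θ (u + 1) j
        = (∑ j ∈ Finset.Ico (2 * u + 2) (2 * u + 2 + m), (j : ℤ) * θ (u + 1) j)
          - 2 * ∑ j ∈ Finset.Ico (2 * u + 2) (2 * u + 2 + m), θ (u + 1) j := by
      rw [Finset.mul_sum, ← Finset.sum_sub_distrib]
      exact Finset.sum_congr rfl fun j _ => by ring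
    have midB : ∑ j ∈ Finset.Ico (2 * u) (2 * u + 2 + m), (j : ℤ) * θ u j
        = (lam u : ℤ) + ∑ j ∈ Finset.Ico (2 * u) (2 * u + 2 + m), (j : ℤ) * θ (u + 1) j := by
      rw [stmt12_dec2top (fun j : ℕ => (j : ℤ) * θ u j) (2 * u) (2 * u + 2 + m)
          (2 * u + m) (2 * u + 1 + m) (by omega) (by omega) (by omega),
        stmt12_dec2bot (fun j : ℕ => (j : ℤ) * θ (u + 1) j) (2 * u) (2 * u + 2 + m)
          (2 * u + 1) (2 * u + 2) (by omega) rfl rfl]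
      rw [hmidL, hS2, P1.1, P1.2, E4, E3]
      push_cast
      linear_combination TmS
    rw [outer1, outer2, midB]
    ring
end

section
/- In the setting of the insertion map Λ, for all u ∈ {0, ..., s_1}: g_u = max{θ_j^{(u)} + θ_{j+1}^{(u)} : j ≥ 2u}, and n_u = min{j ≥ 2u+2 : θ_{j-2}^{(u)} + θ_{j-1}^{(u)} = g_u} (with the convention n_{s_1} = 2s_1 + 2). -/
/-- in the setting of the insertion map `Λ`, for all `u ∈ {0,…,s_1}`,
`g_u` is the maximum of `θ_j^{(u)} + θ_{j+1}^{(u)}` over `j ≥ 2u`, and `n_u` is the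
least `j ≥ 2u+2` with `θ_{j-2}^{(u)} + θ_{j-1}^{(u)} = g_u` (convention
`n_{s_1} = 2 s_1 + 2`). -/
theorem stmt_13 (r : ℕ) (hr : 2 ≤ r)
    (s : ℕ → ℕ) (hs : ∀ j, 1 ≤ j → j < r → s (j + 1) ≤ s j) (hsr : s r = 0)
    (lam : ℕ → ℕ)
    (hlam : ∀ j, 1 ≤ j → j < r → ∀ u, s (j + 1) ≤ u → u + 1 < s j → lam u ≤ lam (u + 1))
    (g : ℕ → ℕ)
    (hg : ∀ u, g u ≤ r - 1 ∧ s (g u + 1) ≤ u ∧ (1 ≤ g u → u < s (g u)))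
    (θ : ℕ → ℕ → ℤ)
    (hbase : ∀ u, θ (s 1) (2 * u) = (g u : ℤ) ∧ θ (s 1) (2 * u + 1) = 0)
    (n : ℕ → ℕ)
    (hn : ∀ u, u < s 1 →
      2 * u + 2 ≤ n u ∧
      (lam u : ℤ) ≤ ∑ j ∈ Finset.Icc (2 * u + 2) (n u),
        ((g u : ℤ) - (θ (u + 1) j + θ (u + 1) (j - 1))) ∧
      ∀ t, 2 * u + 2 ≤ t → t < n u →
        (∑ j ∈ Finset.Icc (2 * u + 2) t,
          ((g u : ℤ) - (θ (u + 1) j + θ (u + 1) (j - 1)))) < (lam u : ℤ))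
    (hθ : ∀ u, u < s 1 →
      (∀ j, j < 2 * u ∨ n u ≤ j → θ u j = θ (u + 1) j) ∧
      (∀ j, 2 * u ≤ j → j + 2 < n u → θ u j = θ (u + 1) (j + 2)) ∧
      θ u (n u - 1) = θ (u + 1) (n u - 1) + (lam u : ℤ) -
        ∑ j ∈ Finset.Icc (2 * u + 2) (n u - 1),
          ((g u : ℤ) - (θ (u + 1) j + θ (u + 1) (j - 1))) ∧
      θ u (n u - 2) = (g u : ℤ) - θ u (n u - 1))
    (hntop : n (s 1) = 2 * s 1 + 2) :
    ∀ u, u ≤ s 1 →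
      ((∀ j, 2 * u ≤ j → θ u j + θ u (j + 1) ≤ (g u : ℤ)) ∧
        ∃ j, 2 * u ≤ j ∧ θ u j + θ u (j + 1) = (g u : ℤ)) ∧
      (2 * u + 2 ≤ n u ∧ θ u (n u - 2) + θ u (n u - 1) = (g u : ℤ) ∧
        ∀ j, 2 * u + 2 ≤ j → j < n u → θ u (j - 2) + θ u (j - 1) ≠ (g u : ℤ)) := by
  -- sum-shift helper
  have shift2 : ∀ (F : ℕ → ℤ) (a b : ℕ),
      ∑ j ∈ Finset.Icc (a + 2) (b + 2), F j = ∑ j ∈ Finset.Icc a b, F (j + 2) := by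
    intro F a b
    rw [← Finset.map_add_right_Icc, Finset.sum_map]
    rfl
  -- monotonicity of s
  have smono : ∀ a b : ℕ, 1 ≤ a → a ≤ b → b ≤ r → s b ≤ s a := by
    intro a b ha hab hbr
    induction b with
    | zero => omega
    | succ b ih =>
      rcases Nat.lt_or_ge a (b + 1) with h | h
      · exact le_trans (hs b (by omega) (by omega)) (ih (by omega) (by omega))
      · have : a = b + 1 := by omega
        rw [this]
  have grle : ∀ u, g u ≤ r - 1 := fun u => (hg u).1
  have gpos : ∀ u, u < s 1 → 1 ≤ g u := by
    intro u hu
    by_contra h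
    have h0 : g u = 0 := by omega
    have h1 := (hg u).2.1
    rw [h0, show (0:ℕ) + 1 = 1 from rfl] at h1
    omega
  have gzero : ∀ u, s 1 ≤ u → g u = 0 := by
    intro u hu
    by_contra h
    have h1 : 1 ≤ g u := by omega
    have h2 := (hg u).2.2 h1
    have h3 : s (g u) ≤ s 1 := smono 1 (g u) le_rfl h1 (by have := grle u; omega)
    omega
  have gmono : ∀ u, g (u + 1) ≤ g u := by
    intro u
    by_contra h
    have h1 : g u + 1 ≤ g (u + 1) := by omega
    have h2 := (hg (u + 1)).2.2 (by omega)
    have h3 : s (g (u + 1)) ≤ s (g u + 1) :=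
      smono (g u + 1) (g (u + 1)) (by omega) h1 (by have := grle (u + 1); omega)
    have h4 := (hg u).2.1
    omega
  have θlow : ∀ d v, v + d = s 1 → ∀ j, j < 2 * v → θ v j = θ (s 1) j := by
    intro d
    induction d with
    | zero =>
      intro v hv j hj
      rw [show v = s 1 from by omega]
    | succ d ih =>
      intro v hv j hj
      have hv1 : v < s 1 := by omega
      rw [(hθ v hv1).1 j (Or.inl hj)]
      exact ih (v + 1) (by omega) j (by omega)
  have θlow' : ∀ v, v ≤ s 1 → ∀ j, j < 2 * v → θ v j = θ (s 1) j :=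
    fun v hv => θlow (s 1 - v) v (by omega)
  have base_pair : ∀ j, 2 * s 1 ≤ j → θ (s 1) j + θ (s 1) (j + 1) = 0 := by
    intro j hj
    rcases Nat.even_or_odd j with h | h
    · obtain ⟨m, hm⟩ := h
      have e1 : θ (s 1) j = (g m : ℤ) := by
        rw [show j = 2 * m from by omega]; exact (hbase m).1
      have e2 : θ (s 1) (j + 1) = 0 := by
        rw [show j + 1 = 2 * m + 1 from by omega]; exact (hbase m).2
      have e3 : g m = 0 := gzero m (by omega)
      rw [e1, e2, e3]; simp
    · obtain ⟨m, hm⟩ := h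
      have e1 : θ (s 1) j = 0 := by
        rw [show j = 2 * m + 1 from by omega]; exact (hbase m).2
      have e2 : θ (s 1) (j + 1) = (g (m + 1) : ℤ) := by
        rw [show j + 1 = 2 * (m + 1) from by omega]; exact (hbase (m + 1)).1
      have e3 : g (m + 1) = 0 := gzero (m + 1) (by omega)
      rw [e1, e2, e3]; simp
  have key : ∀ d u, u + d = s 1 →
      ((∀ j, 2 * u ≤ j → θ u j + θ u (j + 1) ≤ (g u : ℤ)) ∧
        ∃ j, 2 * u ≤ j ∧ θ u j + θ u (j + 1) = (g u : ℤ)) ∧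
      (2 * u + 2 ≤ n u ∧ θ u (n u - 2) + θ u (n u - 1) = (g u : ℤ) ∧
        ∀ j, 2 * u + 2 ≤ j → j < n u → θ u (j - 2) + θ u (j - 1) ≠ (g u : ℤ)) := by
    intro d
    induction d with
    | zero =>
      intro u hueq
      obtain rfl : u = s 1 := by omega
      constructor
      · constructor
        · intro j hj
          have h0 : g (s 1) = 0 := gzero (s 1) le_rfl
          have hbp := base_pair j hj
          rw [hbp, h0]
          norm_num
        · exact ⟨2 * s 1, le_rfl, by rw [(hbase (s 1)).1, (hbase (s 1)).2]; ring⟩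
      · rw [hntop]
        refine ⟨le_rfl, ?_, ?_⟩
        · rw [show 2 * s 1 + 2 - 2 = 2 * s 1 from by omega,
              show 2 * s 1 + 2 - 1 = 2 * s 1 + 1 from by omega,
              (hbase (s 1)).1, (hbase (s 1)).2]
          ring
        · intro j h1 h2
          omega
    | succ d ih =>
      intro u hueq
      have hu : u < s 1 := by omega
      obtain ⟨⟨ihle, ihex⟩, ihn2, ihpair, ihne⟩ := ih (u + 1) (by omega)
      obtain ⟨hN2, hlamle, hmin⟩ := hn u hu
      obtain ⟨hfix, hshift, hlast, hpen⟩ := hθ u hu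
      obtain ⟨K, hK⟩ : ∃ K, n u = K + 2 := ⟨n u - 2, by omega⟩
      have hKu : 2 * u ≤ K := by omega
      rw [hK] at hlamle hmin hfix hshift hlast hpen ⊢
      rw [show K + 2 - 1 = K + 1 from by omega] at hlast hpen ⊢
      rw [show K + 2 - 2 = K from by omega] at hpen ⊢
      have hgm : (g (u + 1) : ℤ) ≤ (g u : ℤ) := by exact_mod_cast gmono u
      have claim_le : ∀ j, 2 * u ≤ j → θ u j + θ u (j + 1) ≤ (g u : ℤ) := by
        intro j hj
        have hcase : j + 3 < K + 2 ∨ K = j + 1 ∨ K = j ∨ j = K + 1 ∨ K + 2 ≤ j := by omega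
        rcases hcase with h | h | h | h | h
        · have e1 : θ u j = θ (u + 1) (j + 2) := hshift j hj (by omega)
          have e2 : θ u (j + 1) = θ (u + 1) (j + 3) := by
            have := hshift (j + 1) (by omega) (by omega)
            rwa [show j + 1 + 2 = j + 3 from by omega] at this
          have hle := ihle (j + 2) (by omega)
          rw [show j + 2 + 1 = j + 3 from by omega] at hle
          rw [e1, e2]
          linarith
        · subst h
          rw [show j + 1 + 1 = j + 2 from by omega] at hpen hlast
          have e1 : θ u j = θ (u + 1) (j + 2) := hshift j hj (by omega)
          have hS := hmin (j + 2) (by omega) (by omega)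
          linarith [hpen, hlast, e1, hS]
        · subst h
          linarith [hpen]
        · subst h
          rw [show K + 1 + 1 = K + 2 from by omega]
          have e2 : θ u (K + 2) = θ (u + 1) (K + 2) := hfix (K + 2) (Or.inr le_rfl)
          rw [show K + 2 = K + 1 + 1 from by omega] at hlamle
          rw [Finset.sum_Icc_succ_top (show 2 * u + 2 ≤ K + 1 + 1 from by omega)] at hlamle
          rw [show K + 1 + 1 - 1 = K + 1 from by omega,
              show K + 1 + 1 = K + 2 from by omega] at hlamle
          linarith [hlast, e2, hlamle]
        · have e1 : θ u j = θ (u + 1) j := hfix j (Or.inr h)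
          have e2 : θ u (j + 1) = θ (u + 1) (j + 1) := hfix (j + 1) (Or.inr (by omega))
          rw [e1, e2]
          linarith [ihle j (by omega)]
      refine ⟨⟨claim_le, K, by omega, by linarith [hpen]⟩, by omega, by linarith [hpen], ?_⟩
      intro j hj1 hj2
      obtain ⟨k, rfl⟩ : ∃ k, j = k + 2 := ⟨j - 2, by omega⟩
      rw [show k + 2 - 2 = k from by omega, show k + 2 - 1 = k + 1 from by omega]
      have hk : 2 * u ≤ k := by omega
      rcases Nat.lt_or_ge (k + 1) K with hlt | hge
      · -- pair shifts two positions
        have e1 : θ u k = θ (u + 1) (k + 2) := hshift k hk (by omega)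
        have e2 : θ u (k + 1) = θ (u + 1) (k + 3) := by
          have := hshift (k + 1) (by omega) (by omega)
          rwa [show k + 1 + 2 = k + 3 from by omega] at this
        rw [e1, e2]
        rcases lt_or_eq_of_le (gmono u) with hgl | hge2
        · have hle := ihle (k + 2) (by omega)
          rw [show k + 2 + 1 = k + 3 from by omega] at hle
          have hglt : (g (u + 1) : ℤ) < (g u : ℤ) := by exact_mod_cast hgl
          intro hcon
          linarith
        · -- case B : g (u+1) = g u
          have hgu1 : 1 ≤ g (u + 1) := by have := gpos u hu; omega
          have hu1 : u + 1 < s 1 := by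
            have h2 := (hg (u + 1)).2.2 hgu1
            have h3 : s (g (u + 1)) ≤ s 1 :=
              smono 1 _ le_rfl hgu1 (by have := grle (u + 1); omega)
            omega
          obtain ⟨hM2, hlamle1, hmin1⟩ := hn (u + 1) hu1
          obtain ⟨hfix1, hshift1, hlast1, hpen1⟩ := hθ (u + 1) hu1
          obtain ⟨L, hL⟩ : ∃ L, n (u + 1) = L + 4 := ⟨n (u + 1) - 4, by omega⟩
          have hLu : 2 * u ≤ L := by omega
          rw [hL] at hlast1 hshift1 hfix1 hpen1 ihne
          simp only [show u + 1 + 1 = u + 2 from by omega] at hlast1 hshift1 hfix1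
          rw [show L + 4 - 1 = L + 3 from by omega] at hlast1 hpen1
          rw [show L + 4 - 2 = L + 2 from by omega] at hpen1
          have hlamu : lam u ≤ lam (u + 1) := by
            have h1 := (hg u).2.1
            have h2 := (hg (u + 1)).2.2 hgu1
            rw [hge2] at h2
            exact hlam (g u) (gpos u hu) (by have := grle u; omega) u h1 h2
          have hodd1 : θ (u + 1) (2 * u + 1) = 0 := by
            rw [θlow' (u + 1) (by omega) (2 * u + 1) (by omega)]
            exact (hbase u).2
          have hodd2 : θ (u + 2) (2 * u + 3) = 0 := by
            rw [θlow' (u + 2) (by omega) (2 * u + 3) (by omega)]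
            have := (hbase (u + 1)).2
            rwa [show 2 * (u + 1) + 1 = 2 * u + 3 from by omega] at this
          have hG : (g (u + 1) : ℤ) = (g u : ℤ) := by exact_mod_cast hge2
          have hterm : ∀ j, 2 * u + 2 ≤ j → j ≤ L + 1 →
              ((g u : ℤ) - (θ (u + 1) j + θ (u + 1) (j - 1)))
                = ((g (u + 1) : ℤ) - (θ (u + 2) (j + 2) + θ (u + 2) (j + 2 - 1))) := by
            intro j h1 h2
            rw [show j + 2 - 1 = j + 1 from by omega, hG]
            have ea : θ (u + 1) j = θ (u + 2) (j + 2) := hshift1 j (by omega) (by omega)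
            have eb : θ (u + 1) (j - 1) = θ (u + 2) (j + 1) := by
              rcases Nat.eq_or_lt_of_le h1 with he | hl2
              · rw [show j - 1 = 2 * u + 1 from by omega,
                    show j + 1 = 2 * u + 3 from by omega, hodd1, hodd2]
              · have := hshift1 (j - 1) (by omega) (by omega)
                rwa [show j - 1 + 2 = j + 1 from by omega] at this
            rw [ea, eb]
          have hkey : ∑ j ∈ Finset.Icc (2 * u + 2) (L + 2),
              ((g u : ℤ) - (θ (u + 1) j + θ (u + 1) (j - 1))) = (lam (u + 1) : ℤ) := by
            rcases Nat.eq_or_lt_of_le hLu with he | hltL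
            · subst he
              rw [Finset.Icc_self, Finset.sum_singleton]
              rw [show 2 * u + 2 - 1 = 2 * u + 1 from by omega, hodd1]
              rw [Finset.Icc_eq_empty (by omega), Finset.sum_empty] at hlast1
              linarith [hpen1, hlast1, hodd2, hG]
            · rw [show L + 2 = L + 1 + 1 from by omega,
                  Finset.sum_Icc_succ_top (show 2 * u + 2 ≤ L + 1 + 1 from by omega)]
              have hsum1 : ∑ j ∈ Finset.Icc (2 * u + 2) (L + 1),
                  ((g u : ℤ) - (θ (u + 1) j + θ (u + 1) (j - 1)))
                  = ∑ j ∈ Finset.Icc (2 * (u + 1) + 2) (L + 3),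
                    ((g (u + 1) : ℤ) - (θ (u + 2) j + θ (u + 2) (j - 1))) := by
                rw [show 2 * (u + 1) + 2 = 2 * u + 2 + 2 from by omega,
                    show L + 3 = L + 1 + 2 from by omega, shift2]
                refine Finset.sum_congr rfl fun j hj => ?_
                simp only [Finset.mem_Icc] at hj
                exact hterm j hj.1 hj.2
              rw [hsum1]
              rw [show L + 1 + 1 - 1 = L + 1 from by omega,
                  show L + 1 + 1 = L + 2 from by omega]
              have ec : θ (u + 1) (L + 1) = θ (u + 2) (L + 3) := by
                have := hshift1 (L + 1) (by omega) (by omega)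
                rwa [show L + 1 + 2 = L + 3 from by omega] at this
              linarith [hpen1, hlast1, ec, hG]
          have hKL : K + 2 ≤ L + 2 := by
            by_contra hcon
            have h2 : L + 2 < K + 2 := by omega
            have h3 := hmin (L + 2) (by omega) h2
            rw [hkey] at h3
            have h4 : (lam u : ℤ) ≤ (lam (u + 1) : ℤ) := by exact_mod_cast hlamu
            linarith
          have hne := ihne (k + 4) (by omega) (by omega)
          rw [show k + 4 - 2 = k + 2 from by omega,
              show k + 4 - 1 = k + 3 from by omega, hG] at hne
          exact hne
      · -- k + 1 = K : pair (K-1, K)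
        have hKk : K = k + 1 := by omega
        subst hKk
        rw [show k + 1 + 1 = k + 2 from by omega] at hpen hlast
        have e1 : θ u k = θ (u + 1) (k + 2) := hshift k hk (by omega)
        have hS := hmin (k + 2) (by omega) (by omega)
        intro hcon
        linarith [hpen, hlast, e1, hS, hcon]
  intro u hu
  exact key (s 1 - u) u (by omega)
end

section
/- In the setting of the insertion map Λ, for all u ∈ {0, ..., s_1 - 1}: g_u ≥ g_{u+1}; and if g_u = g_{u+1} then n_u ≤ n_{u+1} - 2. -/
/-- in the setting of the insertion map `Λ`, for all `u ∈ {0,…,s_1-1}`,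
`g_u ≥ g_{u+1}`, and if `g_u = g_{u+1}` then `n_u ≤ n_{u+1} - 2` (with the convention
`n_{s_1} = 2 s_1 + 2`). -/
theorem stmt_14 (r : ℕ) (hr : 2 ≤ r)
    (s : ℕ → ℕ) (hs : ∀ j, 1 ≤ j → j < r → s (j + 1) ≤ s j) (hsr : s r = 0)
    (lam : ℕ → ℕ)
    (hlam : ∀ j, 1 ≤ j → j < r → ∀ u, s (j + 1) ≤ u → u + 1 < s j → lam u ≤ lam (u + 1))
    (g : ℕ → ℕ)
    (hg : ∀ u, g u ≤ r - 1 ∧ s (g u + 1) ≤ u ∧ (1 ≤ g u → u < s (g u)))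
    (θ : ℕ → ℕ → ℤ)
    (hbase : ∀ u, θ (s 1) (2 * u) = (g u : ℤ) ∧ θ (s 1) (2 * u + 1) = 0)
    (n : ℕ → ℕ)
    (hn : ∀ u, u < s 1 →
      2 * u + 2 ≤ n u ∧
      (lam u : ℤ) ≤ ∑ j ∈ Finset.Icc (2 * u + 2) (n u),
        ((g u : ℤ) - (θ (u + 1) j + θ (u + 1) (j - 1))) ∧
      ∀ t, 2 * u + 2 ≤ t → t < n u →
        (∑ j ∈ Finset.Icc (2 * u + 2) t,
          ((g u : ℤ) - (θ (u + 1) j + θ (u + 1) (j - 1)))) < (lam u : ℤ))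
    (hθ : ∀ u, u < s 1 →
      (∀ j, j < 2 * u ∨ n u ≤ j → θ u j = θ (u + 1) j) ∧
      (∀ j, 2 * u ≤ j → j + 2 < n u → θ u j = θ (u + 1) (j + 2)) ∧
      θ u (n u - 1) = θ (u + 1) (n u - 1) + (lam u : ℤ) -
        ∑ j ∈ Finset.Icc (2 * u + 2) (n u - 1),
          ((g u : ℤ) - (θ (u + 1) j + θ (u + 1) (j - 1))) ∧
      θ u (n u - 2) = (g u : ℤ) - θ u (n u - 1))
    (hntop : n (s 1) = 2 * s 1 + 2) :
    ∀ u, u < s 1 →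
      g (u + 1) ≤ g u ∧ (g u = g (u + 1) → n u + 2 ≤ n (u + 1)) := by
  -- monotonicity of s on [1, r]
  have smono : ∀ a b : ℕ, 1 ≤ a → a ≤ b → b ≤ r → s b ≤ s a := by
    intro a b ha hab hbr
    induction b with
    | zero => omega
    | succ b ih =>
      rcases Nat.eq_or_lt_of_le hab with h | h
      · exact h ▸ le_rfl
      · have h1 : s (b + 1) ≤ s b := hs b (by omega) (by omega)
        exact le_trans h1 (ih (by omega) (by omega))
  -- entries below index 2v are frozen down to level v
  have θfix : ∀ k v, v + k = s 1 → ∀ j, j < 2 * v → θ v j = θ (s 1) j := by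
    intro k
    induction k with
    | zero =>
      intro v hv j hj
      have : v = s 1 := by omega
      rw [this]
    | succ k ih =>
      intro v hv j hj
      have hv1 : v < s 1 := by omega
      rw [(hθ v hv1).1 j (Or.inl hj)]
      exact ih (v + 1) (by omega) j (by omega)
  intro u hu
  have hgu_pos : 1 ≤ g u := by
    by_contra h
    have h0 : g u = 0 := by omega
    have h1 := (hg u).2.1
    rw [h0] at h1
    simp only [zero_add] at h1
    omega
  have part1 : g (u + 1) ≤ g u := by
    by_contra h
    push_neg at h
    have h1 : 1 ≤ g (u + 1) := by omega
    have h2 := (hg (u + 1)).2.2 h1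
    have h3 := (hg u).2.1
    have h4 : s (g (u + 1)) ≤ s (g u + 1) :=
      smono (g u + 1) (g (u + 1)) (by omega) (by omega) (by have := (hg (u + 1)).1; omega)
    omega
  refine ⟨part1, ?_⟩
  intro hgeq
  have hg1 : 1 ≤ g (u + 1) := by omega
  have hgub := (hg (u + 1)).2.2 hg1
  have hu1 : u + 1 < s 1 := by
    have h4 : s (g (u + 1)) ≤ s 1 :=
      smono 1 (g (u + 1)) le_rfl hg1 (by have := (hg (u + 1)).1; omega)
    omega
  have hlam1 : lam u ≤ lam (u + 1) := by
    have h5 : u + 1 < s (g u) := by rw [hgeq]; exact hgub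
    exact hlam (g u) hgu_pos (by have := (hg u).1; omega) u (hg u).2.1 h5
  obtain ⟨hm1, hm2, hm3⟩ := hn (u + 1) hu1
  obtain ⟨hfixu, hshift, hrule3, hrule4⟩ := hθ (u + 1) hu1
  rw [← hgeq] at hrule3 hrule4
  obtain ⟨k, hk⟩ : ∃ k, n (u + 1) = 2 * u + 4 + k := ⟨n (u + 1) - (2 * u + 4), by omega⟩
  -- base zero values
  have z1 : θ (u + 1) (2 * u + 1) = 0 := by
    rw [θfix (s 1 - (u + 1)) (u + 1) (by omega) (2 * u + 1) (by omega)]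
    exact (hbase u).2
  have z2 : θ (u + 2) (2 * u + 3) = 0 := by
    rw [θfix (s 1 - (u + 2)) (u + 2) (by omega) (2 * u + 3) (by omega)]
    have h := (hbase (u + 1)).2
    rw [show 2 * (u + 1) + 1 = 2 * u + 3 from by ring] at h
    exact h
  -- generic term equality on the shifted range
  have termEq : ∀ j, 2 * u + 2 ≤ j → j ≤ 2 * u + 1 + k →
      (g u : ℤ) - (θ (u + 1) j + θ (u + 1) (j - 1))
        = (g u : ℤ) - (θ (u + 2) (j + 2) + θ (u + 2) (j + 2 - 1)) := by
    intro j hj1 hj2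
    have hA : θ (u + 1) j = θ (u + 2) (j + 2) := hshift j (by omega) (by omega)
    have hB : θ (u + 1) (j - 1) = θ (u + 2) (j + 2 - 1) := by
      rcases Nat.eq_or_lt_of_le hj1 with h | h
      · rw [show j - 1 = 2 * u + 1 from by omega, show j + 2 - 1 = 2 * u + 3 from by omega,
          z1, z2]
      · have := hshift (j - 1) (by omega) (by omega)
        rw [show j - 1 + 2 = j + 2 - 1 from by omega] at this
        exact this
    rw [hA, hB]
  -- reindexing of the sum
  have reindex :
      (∑ j ∈ Finset.Icc (2 * u + 2) (2 * u + 1 + k),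
        ((g u : ℤ) - (θ (u + 1) j + θ (u + 1) (j - 1))))
      = ∑ j ∈ Finset.Icc (2 * u + 4) (2 * u + 3 + k),
          ((g u : ℤ) - (θ (u + 2) j + θ (u + 2) (j - 1))) := by
    rw [Finset.sum_congr rfl (fun j hj => by
      have h1 := (Finset.mem_Icc.mp hj).1
      have h2 := (Finset.mem_Icc.mp hj).2
      exact termEq j h1 h2)]
    rw [show (2 * u + 4) = (2 * u + 2) + 2 from by ring,
      show 2 * u + 3 + k = (2 * u + 1 + k) + 2 from by ring,
      ← Finset.map_add_right_Icc, Finset.sum_map]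
    simp [addRightEmbedding_apply]
  -- the last term
  have zz : θ (u + 1) (2 * u + 1 + k) = θ (u + 2) (2 * u + 3 + k) := by
    rcases Nat.eq_zero_or_pos k with h0 | h0
    · rw [show 2 * u + 1 + k = 2 * u + 1 from by omega,
        show 2 * u + 3 + k = 2 * u + 3 from by omega, z1, z2]
    · have := hshift (2 * u + 1 + k) (by omega) (by omega)
      rw [show 2 * u + 1 + k + 2 = 2 * u + 3 + k from by omega] at this
      exact this
  rw [show n (u + 1) - 1 = 2 * u + 3 + k from by omega,
    show 2 * (u + 1) + 2 = 2 * u + 4 from by ring] at hrule3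
  rw [show n (u + 1) - 1 = 2 * u + 3 + k from by omega,
    show n (u + 1) - 2 = 2 * u + 2 + k from by omega] at hrule4
  -- the total sum equals lam (u+1)
  have Stotal :
      (∑ j ∈ Finset.Icc (2 * u + 2) ((2 * u + 1 + k) + 1),
        ((g u : ℤ) - (θ (u + 1) j + θ (u + 1) (j - 1)))) = (lam (u + 1) : ℤ) := by
    rw [Finset.sum_Icc_succ_top (by omega), reindex]
    rw [show (2 * u + 1 + k) + 1 = 2 * u + 2 + k from by ring,
      show 2 * u + 2 + k - 1 = 2 * u + 1 + k from by omega]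
    rw [hrule4, hrule3, zz]
    ring
  by_contra hcon
  push_neg at hcon
  have hlt := (hn u hu).2.2 ((2 * u + 1 + k) + 1) (by omega) (by omega)
  rw [Stotal] at hlt
  have : (lam u : ℤ) ≤ (lam (u + 1) : ℤ) := by exact_mod_cast hlam1
  omega
end

section
/- Let r ≥ 2 and let ν be a partition in A_r with multiplicity sequence η^{(0)}. Define recursively, for u ≥ 0: h_u := max{η_j^{(u)} + η_{j+1}^{(u)} : j ≥ 2u}, m_u := min{j ≥ 2u+2 : η_{j-2}^{(u)} + η_{j-1}^{(u)} = h_u}, and η^{(u+1)} from η^{(u)} by: η_j^{(u+1)} = η_j^{(u)} for j < 2u or j ≥ m_u; η_j^{(u+1)} = η_{j-2}^{(u)} for 2u+2 ≤ j < m_u; (η_{2u}^{(u+1)}, η_{2u+1}^{(u+1)}) = (h_u, 0). Then for all u ≥ 0: (1) 0 ≤ h_{u+1} ≤ h_u ≤ r-1; (2) the quantity κ_u := h_u - η_{2u}^{(u)} + Σ_{j=2u}^{m_u-3}[h_u - (η_j^{(u)} + η_{j+1}^{(u)})] is non-negative; and (3) if h_u = h_{u+1} then m_{u+1} ≥ m_u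 + 2 and κ_{u+1} ≥ κ_u. -/
/-- in the setting of the extraction map `Γ` applied to `ν ∈ A_r`
(axiomatized by the hypotheses on `η, h, m`), for all `u ≥ 0`:
(1) `0 ≤ h_{u+1} ≤ h_u ≤ r-1`; (2) `κ_u ≥ 0`; (3) if `h_u = h_{u+1}` then
`m_{u+1} ≥ m_u + 2` and `κ_{u+1} ≥ κ_u`. -/
theorem stmt_15 (r : ℕ) (hr : 2 ≤ r)
    (η : ℕ → ℕ → ℤ)
    (hpos : ∀ j, 0 ≤ η 0 j) (hfin : ∃ N, ∀ j, N ≤ j → η 0 j = 0)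
    (hA0 : η 0 0 ≤ (r : ℤ) - 1) (hA : ∀ j, η 0 j + η 0 (j + 1) ≤ (r : ℤ) - 1)
    (h : ℕ → ℤ)
    (hh : ∀ u, (∀ j, 2 * u ≤ j → η u j + η u (j + 1) ≤ h u) ∧
      ∃ j, 2 * u ≤ j ∧ η u j + η u (j + 1) = h u)
    (m : ℕ → ℕ)
    (hm : ∀ u, 2 * u + 2 ≤ m u ∧ η u (m u - 2) + η u (m u - 1) = h u ∧
      ∀ j, 2 * u + 2 ≤ j → j < m u → η u (j - 2) + η u (j - 1) ≠ h u)
    (hrec : ∀ u, (∀ j, j < 2 * u ∨ m u ≤ j → η (u + 1) j = η u j) ∧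
      (∀ j, 2 * u + 2 ≤ j → j < m u → η (u + 1) j = η u (j - 2)) ∧
      η (u + 1) (2 * u) = h u ∧ η (u + 1) (2 * u + 1) = 0) :
    let κ : ℕ → ℤ := fun u => h u - η u (2 * u) +
      ∑ j ∈ Finset.Icc (2 * u) (m u - 3), (h u - (η u j + η u (j + 1)))
    ∀ u : ℕ,
      (0 ≤ h (u + 1) ∧ h (u + 1) ≤ h u ∧ h u ≤ (r : ℤ) - 1) ∧
      0 ≤ κ u ∧
      (h u = h (u + 1) → m u + 2 ≤ m (u + 1) ∧ κ u ≤ κ (u + 1)) := by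
  intro κ
  -- positivity of all η u
  have hpos' : ∀ u j, 0 ≤ η u j := by
    intro u
    induction u with
    | zero => exact hpos
    | succ u ih =>
      have hhu0 : 0 ≤ h u := by
        obtain ⟨j, hj, hje⟩ := (hh u).2
        have h1 := ih j; have h2 := ih (j + 1); linarith
      intro j
      obtain ⟨hr1, hr2, hr3, hr4⟩ := hrec u
      obtain ⟨hm1, hm2, hm3⟩ := hm u
      by_cases h1 : j < 2 * u
      · rw [hr1 j (Or.inl h1)]; exact ih j
      by_cases h2 : m u ≤ j
      · rw [hr1 j (Or.inr h2)]; exact ih j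
      by_cases h3 : j = 2 * u
      · subst h3; rw [hr3]; exact hhu0
      by_cases h4 : j = 2 * u + 1
      · subst h4; rw [hr4]
      · rw [hr2 j (by omega) (by omega)]; exact ih _
  have hh0 : ∀ u, 0 ≤ h u := by
    intro u
    obtain ⟨j, hj, hje⟩ := (hh u).2
    have h1 := hpos' u j; have h2 := hpos' u (j + 1); linarith
  -- key monotonicity at m u
  have hkey : ∀ u, η u (m u) ≤ η u (m u - 2) := by
    intro u
    obtain ⟨hm1, hm2, _⟩ := hm u
    have h1 := (hh u).1 (m u - 1) (by omega)
    have e : m u - 1 + 1 = m u := by omega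
    rw [e] at h1
    linarith
  -- pairs of η (u+1) beyond 2u+2 are bounded by h u
  have hple : ∀ u j, 2 * u + 2 ≤ j → η (u + 1) j + η (u + 1) (j + 1) ≤ h u := by
    intro u j hj
    obtain ⟨hr1, hr2, hr3, hr4⟩ := hrec u
    obtain ⟨hm1, hm2, hm3⟩ := hm u
    by_cases h1 : m u ≤ j
    · rw [hr1 j (Or.inr h1), hr1 (j + 1) (Or.inr (by omega))]
      exact (hh u).1 j (by omega)
    by_cases h2 : j + 1 < m u
    · rw [hr2 j hj (by omega), hr2 (j + 1) (by omega) h2]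
      have e : j + 1 - 2 = j - 2 + 1 := by omega
      rw [e]
      exact (hh u).1 (j - 2) (by omega)
    · have hj1 : j + 1 = m u := by omega
      rw [hr2 j hj (by omega), hj1, hr1 (m u) (Or.inr le_rfl)]
      have h5 := (hh u).1 (j - 2) (by omega)
      have e : j - 2 + 1 = j - 1 := by omega
      rw [e] at h5
      have e2 : m u - 2 = j - 1 := by omega
      have hk := hkey u
      rw [e2] at hk
      linarith
  -- strict version below m u
  have hplt : ∀ u j, 2 * u + 2 ≤ j → j < m u →
      η (u + 1) j + η (u + 1) (j + 1) < h u := by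
    intro u j hj hjm
    obtain ⟨hr1, hr2, hr3, hr4⟩ := hrec u
    obtain ⟨hm1, hm2, hm3⟩ := hm u
    by_cases h2 : j + 1 < m u
    · rw [hr2 j hj hjm, hr2 (j + 1) (by omega) h2]
      have e : j + 1 - 2 = j - 1 := by omega
      rw [e]
      have hle := (hh u).1 (j - 2) (by omega)
      have e2 : j - 2 + 1 = j - 1 := by omega
      rw [e2] at hle
      have hne := hm3 j hj hjm
      exact lt_of_le_of_ne hle hne
    · have hj1 : j + 1 = m u := by omega
      rw [hr2 j hj hjm, hj1, hr1 (m u) (Or.inr le_rfl)]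
      have hle := (hh u).1 (j - 2) (by omega)
      have e : j - 2 + 1 = j - 1 := by omega
      rw [e] at hle
      have hne := hm3 j hj hjm
      have hlt : η u (j - 2) + η u (j - 1) < h u := lt_of_le_of_ne hle hne
      have e2 : m u - 2 = j - 1 := by omega
      have hk := hkey u
      rw [e2] at hk
      linarith
  have hdec : ∀ u, h (u + 1) ≤ h u := by
    intro u
    obtain ⟨j, hj, hje⟩ := (hh (u + 1)).2
    rw [← hje]
    exact hple u j (by omega)
  have htop : ∀ u, h u ≤ (r : ℤ) - 1 := by
    intro u
    induction u with
    | zero =>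
      obtain ⟨j, _, hje⟩ := (hh 0).2
      rw [← hje]; exact hA j
    | succ u ih => exact le_trans (hdec u) ih
  have hκpos : ∀ u, 0 ≤ κ u := by
    intro u
    have h1 : η u (2 * u) ≤ h u := by
      have h2 := (hh u).1 (2 * u) le_rfl
      have h3 := hpos' u (2 * u + 1)
      linarith
    have h2 : (0 : ℤ) ≤ ∑ j ∈ Finset.Icc (2 * u) (m u - 3), (h u - (η u j + η u (j + 1))) := by
      apply Finset.sum_nonneg
      intro j hj
      have hj' := (Finset.mem_Icc.mp hj).1
      have := (hh u).1 j hj'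
      linarith
    simp only [κ]
    linarith
  have hmono : ∀ u, h u = h (u + 1) → m u + 2 ≤ m (u + 1) := by
    intro u he
    by_contra hc
    push_neg at hc
    obtain ⟨hm1', hm2', _⟩ := hm (u + 1)
    have hj : 2 * u + 2 ≤ m (u + 1) - 2 := by omega
    have hlt : m (u + 1) - 2 < m u := by omega
    have hx := hplt u (m (u + 1) - 2) hj hlt
    have e : m (u + 1) - 2 + 1 = m (u + 1) - 1 := by omega
    rw [e, hm2'] at hx
    linarith
  have hκmono : ∀ u, h u = h (u + 1) → κ u ≤ κ (u + 1) := by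
    intro u he
    have hmm := hmono u he
    obtain ⟨hr1, hr2, hr3, hr4⟩ := hrec u
    obtain ⟨hm1, hm2, hm3⟩ := hm u
    obtain ⟨hm1', _, _⟩ := hm (u + 1)
    have hk := hkey u
    have hSnonneg : ∀ j ∈ Finset.Icc (2 * (u + 1)) (m (u + 1) - 3),
        (0 : ℤ) ≤ h (u + 1) - (η (u + 1) j + η (u + 1) (j + 1)) := by
      intro j hj
      have hj' := (Finset.mem_Icc.mp hj).1
      have := (hh (u + 1)).1 j hj'
      linarith
    simp only [κ]
    have e21 : 2 * (u + 1) = 2 * u + 2 := by ring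
    rw [e21]
    by_cases hc : m u = 2 * u + 2
    · -- old sum is zero; new leading term dominates
      have hT : ∑ j ∈ Finset.Icc (2 * u) (m u - 3), (h u - (η u j + η u (j + 1))) = 0 := by
        rcases Nat.eq_zero_or_pos u with hu | hu
        · subst hu
          simp only [hc]
          norm_num
          have e0 : m 0 - 2 = 0 := by omega
          have e1 : m 0 - 1 = 1 := by omega
          rw [e0, e1] at hm2
          simpa using by linarith [hm2]
        · have : Finset.Icc (2 * u) (m u - 3) = ∅ := by
            apply Finset.Icc_eq_empty
            omega
          rw [this, Finset.sum_empty]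
      rw [hT]
      have hη : η (u + 1) (2 * u + 2) = η u (m u) := by
        rw [hr1 (2 * u + 2) (Or.inr (by omega)), hc]
      rw [hη]
      have e2 : m u - 2 = 2 * u := by omega
      rw [e2] at hk
      have hS : (0 : ℤ) ≤ ∑ j ∈ Finset.Icc (2 * u + 2) (m (u + 1) - 3),
          (h (u + 1) - (η (u + 1) j + η (u + 1) (j + 1))) := by
        apply Finset.sum_nonneg
        intro j hj
        exact hSnonneg j (by rwa [e21])
      linarith
    · -- m u ≥ 2u+3
      have hmu3 : 2 * u + 3 ≤ m u := by omega
      have hη : η (u + 1) (2 * u + 2) = η u (2 * u) := by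
        have e : 2 * u + 2 - 2 = 2 * u := by omega
        rw [hr2 (2 * u + 2) le_rfl (by omega), e]
      rw [hη]
      -- reindex the old sum
      have hre : ∑ i ∈ Finset.Icc (2 * u) (m u - 3), (h u - (η u i + η u (i + 1)))
          = ∑ j ∈ Finset.Icc (2 * u + 2) (m u - 1), (h u - (η u (j - 2) + η u (j - 1))) := by
        have e1 : Finset.Icc (2 * u + 2) (m u - 1)
            = (Finset.Icc (2 * u) (m u - 3)).map (addRightEmbedding 2) := by
          rw [Finset.map_add_right_Icc]
          congr 1
          omega
        rw [e1, Finset.sum_map]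
        apply Finset.sum_congr rfl
        intro i hi
        have ea : addRightEmbedding 2 i = i + 2 := rfl
        rw [ea]
        have e2 : i + 2 - 2 = i := by omega
        have e3 : i + 2 - 1 = i + 1 := by omega
        rw [e2, e3]
      -- termwise bound
      have hterm : ∀ j ∈ Finset.Icc (2 * u + 2) (m u - 1),
          h u - (η u (j - 2) + η u (j - 1))
            ≤ h (u + 1) - (η (u + 1) j + η (u + 1) (j + 1)) := by
        intro j hj
        obtain ⟨hj1, hj2⟩ := Finset.mem_Icc.mp hj
        have hηj : η (u + 1) j = η u (j - 2) := hr2 j hj1 (by omega)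
        by_cases hc2 : j + 1 < m u
        · have hηj1 : η (u + 1) (j + 1) = η u (j + 1 - 2) := hr2 (j + 1) (by omega) hc2
          rw [hηj, hηj1, ← he]
          have e : j + 1 - 2 = j - 1 := by omega
          rw [e]
        · have hjm : j + 1 = m u := by omega
          have hηj1 : η (u + 1) (j + 1) = η u (j + 1) := hr1 (j + 1) (Or.inr (by omega))
          rw [hηj, hηj1, hjm, ← he]
          have e : m u - 2 = j - 1 := by omega
          rw [e] at hk
          linarith
      have hS1 : ∑ j ∈ Finset.Icc (2 * u + 2) (m u - 1), (h u - (η u (j - 2) + η u (j - 1)))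
          ≤ ∑ j ∈ Finset.Icc (2 * u + 2) (m u - 1),
              (h (u + 1) - (η (u + 1) j + η (u + 1) (j + 1))) :=
        Finset.sum_le_sum hterm
      have hS2 : ∑ j ∈ Finset.Icc (2 * u + 2) (m u - 1),
              (h (u + 1) - (η (u + 1) j + η (u + 1) (j + 1)))
          ≤ ∑ j ∈ Finset.Icc (2 * u + 2) (m (u + 1) - 3),
              (h (u + 1) - (η (u + 1) j + η (u + 1) (j + 1))) := by
        apply Finset.sum_le_sum_of_subset_of_nonneg
        · apply Finset.Icc_subset_Icc_right
          omega
        · intro j hj _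
          exact hSnonneg j (by rwa [e21])
      rw [hre]
      linarith
  intro u
  refine ⟨⟨hh0 (u + 1), hdec u, htop u⟩, hκpos u, fun he => ⟨hmono u he, hκmono u he⟩⟩
end

section
/- In the setting of the extraction map Γ applied to a partition ν ∈ A_r, for all u ≥ 0 before the process terminates: Σ_{j≥0} η_j^{(u+1)} = Σ_{j≥0} η_j^{(u)}, and Σ_{j≥0} j·η_j^{(u+1)} = Σ_{j≥0} j·η_j^{(u)} - κ_u, where κ_u := h_u - η_{2u}^{(u)} + Σ_{j=2u}^{m_u-3}[h_u - (η_j^{(u)} + η_{j+1}^{(u)})]. -/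
lemma aux_sums (f g : ℕ → ℤ) (a k N : ℕ) (H : ℤ)
    (hMN : a + 2 + k ≤ N)
    (h1 : ∀ j, j < a ∨ a + 2 + k ≤ j → g j = f j)
    (h2 : ∀ j, a ≤ j → j < a + k → g (j + 2) = f j)
    (h3 : g a = H) (h4 : g (a + 1) = 0) (h5 : f (a + k) + f (a + k + 1) = H) :
    (∑ j ∈ Finset.range N, g j = ∑ j ∈ Finset.range N, f j) ∧
    (∑ j ∈ Finset.range N, (j : ℤ) * g j = ∑ j ∈ Finset.range N, (j : ℤ) * f j -
      (H - f a + ∑ j ∈ Finset.Ico a (a + k), (H - (f j + f (j + 1))))) := by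
  have split : ∀ w : ℕ → ℤ, (∀ j, j < a ∨ a + 2 + k ≤ j → w j * g j = w j * f j) →
      ∑ j ∈ Finset.range N, w j * g j - ∑ j ∈ Finset.range N, w j * f j =
      ∑ j ∈ Finset.Ico a (a + 2 + k), w j * g j - ∑ j ∈ Finset.Ico a (a + 2 + k), w j * f j := by
    intro w hw
    have e1 : ∀ p : ℕ → ℤ, ∑ j ∈ Finset.range N, p j =
        ∑ j ∈ Finset.Ico 0 a, p j + ∑ j ∈ Finset.Ico a (a + 2 + k), p j +
        ∑ j ∈ Finset.Ico (a + 2 + k) N, p j := by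
      intro p
      rw [Finset.range_eq_Ico,
        ← Finset.sum_Ico_consecutive p (Nat.zero_le a) (by omega : a ≤ N),
        ← Finset.sum_Ico_consecutive p (by omega : a ≤ a + 2 + k) hMN]
      ring
    rw [e1, e1]
    have c1 : ∑ j ∈ Finset.Ico 0 a, w j * g j = ∑ j ∈ Finset.Ico 0 a, w j * f j :=
      Finset.sum_congr rfl fun j hj => hw j (Or.inl (Finset.mem_Ico.mp hj).2)
    have c2 : ∑ j ∈ Finset.Ico (a + 2 + k) N, w j * g j =
        ∑ j ∈ Finset.Ico (a + 2 + k) N, w j * f j :=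
      Finset.sum_congr rfl fun j hj => hw j (Or.inr (Finset.mem_Ico.mp hj).1)
    rw [c1, c2]; ring
  have midg : ∀ w : ℕ → ℤ, ∑ j ∈ Finset.Ico a (a + 2 + k), w j * g j =
      w a * H + ∑ j ∈ Finset.Ico a (a + k), w (j + 2) * f j := by
    intro w
    rw [← Finset.sum_Ico_consecutive _ (by omega : a ≤ a + 2) (by omega : a + 2 ≤ a + 2 + k)]
    have e2 : ∑ j ∈ Finset.Ico (a + 2) (a + 2 + k), w j * g j =
        ∑ j ∈ Finset.Ico a (a + k), w (j + 2) * f j := by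
      have hmap : Finset.Ico (a + 2) (a + 2 + k) =
          Finset.map (addRightEmbedding 2) (Finset.Ico a (a + k)) := by
        rw [Finset.map_add_right_Ico]; congr 1; omega
      rw [hmap, Finset.sum_map]
      refine Finset.sum_congr rfl fun j hj => ?_
      have hj' := Finset.mem_Ico.mp hj
      simp only [addRightEmbedding_apply]
      rw [h2 j hj'.1 hj'.2]
    rw [e2]
    have h21 : a + 2 = a + 1 + 1 := rfl
    have e3 : ∑ j ∈ Finset.Ico a (a + 2), w j * g j = w a * H := by
      rw [h21, Finset.sum_Ico_succ_top (by omega), Finset.sum_Ico_succ_top (by omega),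
        Finset.Ico_self, Finset.sum_empty, h3, h4]
      ring
    rw [e3]
  have midf : ∀ w : ℕ → ℤ, ∑ j ∈ Finset.Ico a (a + 2 + k), w j * f j =
      ∑ j ∈ Finset.Ico a (a + k), w j * f j + w (a + k) * f (a + k) +
      w (a + k + 1) * f (a + k + 1) := by
    intro w
    have hsp : a + 2 + k = (a + k + 1) + 1 := by omega
    rw [hsp, Finset.sum_Ico_succ_top (by omega), Finset.sum_Ico_succ_top (by omega)]
  have tele : ∑ j ∈ Finset.Ico a (a + k), (f j - f (j + 1)) = f a - f (a + k) := by
    rw [Finset.sum_Ico_eq_sum_range]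
    have hk : a + k - a = k := by omega
    rw [hk]
    have := Finset.sum_range_sub' (fun i => f (a + i)) k
    simpa [Nat.add_assoc] using this
  constructor
  · have s1 := split (fun _ => 1) (fun j hj => by simp [h1 j hj])
    have m1 := midg (fun _ => 1)
    have m2 := midf (fun _ => 1)
    simp only [one_mul] at s1 m1 m2
    linarith [s1, m1, m2, h5]
  · have s1 := split (fun j => (j : ℤ)) (fun j hj => by rw [h1 j hj])
    have m1 := midg (fun j => (j : ℤ))
    have m2 := midf (fun j => (j : ℤ))
    have m1' : ∑ j ∈ Finset.Ico a (a + 2 + k), (j : ℤ) * g j =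
        (a : ℤ) * H + (∑ j ∈ Finset.Ico a (a + k), (j : ℤ) * f j
          + 2 * ∑ j ∈ Finset.Ico a (a + k), f j) := by
      rw [m1, Finset.mul_sum, ← Finset.sum_add_distrib]
      congr 1
      refine Finset.sum_congr rfl fun j _ => ?_
      push_cast; ring
    have m2' : ∑ j ∈ Finset.Ico a (a + 2 + k), (j : ℤ) * f j =
        ∑ j ∈ Finset.Ico a (a + k), (j : ℤ) * f j + ((a : ℤ) + k) * f (a + k) +
        ((a : ℤ) + k + 1) * f (a + k + 1) := by
      rw [m2]; push_cast; ring
    have sumH : ∑ j ∈ Finset.Ico a (a + k), (H - (f j + f (j + 1))) =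
        (k : ℤ) * H - ∑ j ∈ Finset.Ico a (a + k), (f j + f (j + 1)) := by
      rw [Finset.sum_sub_distrib, Finset.sum_const, Nat.card_Ico]
      have : a + k - a = k := by omega
      rw [this]; ring
    have sum2 : ∑ j ∈ Finset.Ico a (a + k), (f j + f (j + 1)) =
        2 * ∑ j ∈ Finset.Ico a (a + k), f j - (f a - f (a + k)) := by
      rw [← tele, Finset.mul_sum, ← Finset.sum_sub_distrib]
      exact Finset.sum_congr rfl fun j _ => by ring
    have h5' : ((a : ℤ) + k + 1) * (f (a + k) + f (a + k + 1)) = ((a : ℤ) + k + 1) * H := by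
      rw [h5]
    linear_combination s1 + m1' - m2' + sumH - sum2 - h5'

/-- in the setting of the extraction map `Γ`, for each step `u` before
the process terminates (`h_u ≠ 0`), the total multiplicity is preserved and the weight
decreases by exactly `κ_u`. -/
theorem stmt_16 (r : ℕ) (hr : 2 ≤ r)
    (η : ℕ → ℕ → ℤ)
    (hpos : ∀ j, 0 ≤ η 0 j) (hfin : ∃ N, ∀ j, N ≤ j → η 0 j = 0)
    (hA0 : η 0 0 ≤ (r : ℤ) - 1) (hA : ∀ j, η 0 j + η 0 (j + 1) ≤ (r : ℤ) - 1)
    (h : ℕ → ℤ)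
    (hh : ∀ u, (∀ j, 2 * u ≤ j → η u j + η u (j + 1) ≤ h u) ∧
      ∃ j, 2 * u ≤ j ∧ η u j + η u (j + 1) = h u)
    (m : ℕ → ℕ)
    (hm : ∀ u, 2 * u + 2 ≤ m u ∧ η u (m u - 2) + η u (m u - 1) = h u ∧
      ∀ j, 2 * u + 2 ≤ j → j < m u → η u (j - 2) + η u (j - 1) ≠ h u)
    (hrec : ∀ u, (∀ j, j < 2 * u ∨ m u ≤ j → η (u + 1) j = η u j) ∧
      (∀ j, 2 * u + 2 ≤ j → j < m u → η (u + 1) j = η u (j - 2)) ∧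
      η (u + 1) (2 * u) = h u ∧ η (u + 1) (2 * u + 1) = 0) :
    let κ : ℕ → ℤ := fun u => h u - η u (2 * u) +
      ∑ j ∈ Finset.Icc (2 * u) (m u - 3), (h u - (η u j + η u (j + 1)))
    ∀ u : ℕ, h u ≠ 0 →
      (∑ᶠ j : ℕ, η (u + 1) j) = (∑ᶠ j : ℕ, η u j) ∧
      (∑ᶠ j : ℕ, (j : ℤ) * η (u + 1) j) = (∑ᶠ j : ℕ, (j : ℤ) * η u j) - κ u := by
  intro κ u hu
  have hκ : ∀ v, κ v = h v - η v (2 * v) +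
      ∑ j ∈ Finset.Icc (2 * v) (m v - 3), (h v - (η v j + η v (j + 1))) := fun v => rfl
  -- finiteness propagates
  have hfinU : ∀ v, ∃ N, ∀ j, N ≤ j → η v j = 0 := by
    intro v; induction v with
    | zero => exact hfin
    | succ v ih =>
      obtain ⟨N, hN⟩ := ih
      exact ⟨N + m v, fun j hj => by
        rw [(hrec v).1 j (Or.inr (by omega))]; exact hN j (by omega)⟩
  obtain ⟨N0, hN0⟩ := hfinU u
  obtain ⟨N1, hN1⟩ := hfinU (u + 1)
  obtain ⟨hm1, hm2, -⟩ := hm u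
  obtain ⟨k, hk⟩ : ∃ k, m u = 2 * u + 2 + k := ⟨m u - (2 * u + 2), by omega⟩
  set N := N0 + N1 + m u with hNdef
  have h5 : η u (2 * u + k) + η u (2 * u + k + 1) = h u := by
    have e1 : m u - 2 = 2 * u + k := by omega
    have e2 : m u - 1 = 2 * u + k + 1 := by omega
    rw [e1, e2] at hm2; exact hm2
  have key := aux_sums (η u) (η (u + 1)) (2 * u) k N (h u)
    (by omega)
    (fun j hj => (hrec u).1 j (by
      rcases hj with hj | hj
      · exact Or.inl hj
      · exact Or.inr (by omega)))
    (fun j hja hjk => by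
      have := (hrec u).2.1 (j + 2) (by omega) (by omega)
      simpa using this)
    ((hrec u).2.2.1) ((hrec u).2.2.2) h5
  -- finsum to finite sums
  have sub : ∀ p : ℕ → ℤ, (∀ j, N ≤ j → p j = 0) →
      (∑ᶠ j : ℕ, p j) = ∑ j ∈ Finset.range N, p j := by
    intro p hp
    refine finsum_eq_finset_sum_of_support_subset p fun j hj => ?_
    simp only [Finset.coe_range, Set.mem_Iio]
    by_contra hc
    exact hj (hp j (by omega))
  have r1 := sub (η (u + 1)) (fun j hj => hN1 j (by omega))
  have r2 := sub (η u) (fun j hj => hN0 j (by omega))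
  have r3 : (∑ᶠ j : ℕ, (j : ℤ) * η (u + 1) j) = ∑ j ∈ Finset.range N, (j : ℤ) * η (u + 1) j :=
    sub (fun j => (j : ℤ) * η (u + 1) j)
      (fun j hj => by show (j : ℤ) * η (u + 1) j = 0; rw [hN1 j (by omega)]; ring)
  have r4 : (∑ᶠ j : ℕ, (j : ℤ) * η u j) = ∑ j ∈ Finset.range N, (j : ℤ) * η u j :=
    sub (fun j => (j : ℤ) * η u j)
      (fun j hj => by show (j : ℤ) * η u j = 0; rw [hN0 j (by omega)]; ring)
  -- convert Icc to Ico in κ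
  have hIcc : ∑ j ∈ Finset.Icc (2 * u) (m u - 3), (h u - (η u j + η u (j + 1))) =
      ∑ j ∈ Finset.Ico (2 * u) (2 * u + k), (h u - (η u j + η u (j + 1))) := by
    rcases Nat.lt_or_ge (m u) 3 with h3 | h3
    · have hu0 : u = 0 := by omega
      have hk0 : k = 0 := by omega
      subst hu0; subst hk0
      have e0 : m 0 - 3 = 0 := by omega
      simp only [Nat.mul_zero, e0, Finset.Icc_self, Finset.sum_singleton, Nat.add_zero,
        Finset.Ico_self, Finset.sum_empty]
      simp only [Nat.mul_zero, Nat.add_zero] at h5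
      linarith [h5]
    · have : Finset.Icc (2 * u) (m u - 3) = Finset.Ico (2 * u) (2 * u + k) := by
        rw [← Finset.Ico_add_one_right_eq_Icc]
        congr 1; omega
      rw [this]
  constructor
  · rw [r1, r2]; exact key.1
  · rw [r3, r4, hκ u, hIcc]; exact key.2
end

section
/- In the setting of the extraction map Γ applied to ν ∈ A_r, for every u with h_u > 0 one has m_u = min{t ≥ 2u+2 : Σ_{j=2u+2}^{t}[h_u - (η_j^{(u+1)} + η_{j-1}^{(u+1)})] ≥ κ_u}, where κ_u := h_u - η_{2u}^{(u)} + Σ_{j=2u}^{m_u-3}[h_u - (η_j^{(u)} + η_{j+1}^{(u)})]. -/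
/-- in the setting of the extraction map `Γ`, for every `u` with
`h_u > 0`, `m_u` is the least `t ≥ 2u+2` such that
`Σ_{j=2u+2}^t [h_u - (η_j^{(u+1)} + η_{j-1}^{(u+1)})] ≥ κ_u`. -/
theorem stmt_18 (r : ℕ) (hr : 2 ≤ r)
    (η : ℕ → ℕ → ℤ)
    (hpos : ∀ j, 0 ≤ η 0 j) (hfin : ∃ N, ∀ j, N ≤ j → η 0 j = 0)
    (hA0 : η 0 0 ≤ (r : ℤ) - 1) (hA : ∀ j, η 0 j + η 0 (j + 1) ≤ (r : ℤ) - 1)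
    (h : ℕ → ℤ)
    (hh : ∀ u, (∀ j, 2 * u ≤ j → η u j + η u (j + 1) ≤ h u) ∧
      ∃ j, 2 * u ≤ j ∧ η u j + η u (j + 1) = h u)
    (m : ℕ → ℕ)
    (hm : ∀ u, 2 * u + 2 ≤ m u ∧ η u (m u - 2) + η u (m u - 1) = h u ∧
      ∀ j, 2 * u + 2 ≤ j → j < m u → η u (j - 2) + η u (j - 1) ≠ h u)
    (hrec : ∀ u, (∀ j, j < 2 * u ∨ m u ≤ j → η (u + 1) j = η u j) ∧
      (∀ j, 2 * u + 2 ≤ j → j < m u → η (u + 1) j = η u (j - 2)) ∧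
      η (u + 1) (2 * u) = h u ∧ η (u + 1) (2 * u + 1) = 0) :
    let κ : ℕ → ℤ := fun u => h u - η u (2 * u) +
      ∑ j ∈ Finset.Icc (2 * u) (m u - 3), (h u - (η u j + η u (j + 1)))
    ∀ u : ℕ, 0 < h u →
      2 * u + 2 ≤ m u ∧
      κ u ≤ (∑ j ∈ Finset.Icc (2 * u + 2) (m u),
        (h u - (η (u + 1) j + η (u + 1) (j - 1)))) ∧
      ∀ t, 2 * u + 2 ≤ t → t < m u →
        (∑ j ∈ Finset.Icc (2 * u + 2) t,
          (h u - (η (u + 1) j + η (u + 1) (j - 1)))) < κ u := by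
  intro κ u hu
  have hκ : κ u = h u - η u (2 * u) +
      ∑ j ∈ Finset.Icc (2 * u) (m u - 3), (h u - (η u j + η u (j + 1))) := rfl
  obtain ⟨hh1, -⟩ := hh u
  obtain ⟨hm1, hm2, hm3⟩ := hm u
  obtain ⟨hr1, hr2, hr3, hr4⟩ := hrec u
  set a := 2 * u with ha
  set M := m u with hMdef
  set g : ℕ → ℤ := fun i => h u - (η u i + η u (i + 1)) with hg
  set F : ℕ → ℤ := fun j => h u - (η (u + 1) j + η (u + 1) (j - 1)) with hF
  have hgnn : ∀ i, a ≤ i → 0 ≤ g i := by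
    intro i hi
    have := hh1 i hi
    simp only [hg]; linarith
  -- formula for the partial sums below M
  have Sform : ∀ t, a + 2 ≤ t → t < M →
      (∑ j ∈ Finset.Icc (a + 2) t, F j)
        = h u - η u a + ∑ j ∈ Finset.Icc (a + 3) t, g (j - 3) := by
    intro t
    induction t with
    | zero => omega
    | succ n ih =>
      intro ht htM
      rcases Nat.lt_or_ge n (a + 2) with hn | hn
      · have hn1 : n = a + 1 := by omega
        subst hn1
        have e0 : a + 1 + 1 = a + 2 := by omega
        rw [e0]
        rw [Finset.Icc_self, Finset.sum_singleton,
          Finset.Icc_eq_empty (by omega), Finset.sum_empty]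
        have h1 : η (u + 1) (a + 2) = η u a := by
          have h' := hr2 (a + 2) (by omega) (by omega)
          rwa [show a + 2 - 2 = a by omega] at h'
        have h2 : η (u + 1) (a + 2 - 1) = 0 := by
          rw [show a + 2 - 1 = 2 * u + 1 by omega]; exact hr4
        simp only [hF]
        rw [h1, h2]
        ring
      · have h1 : (∑ j ∈ Finset.Icc (a + 2) (n + 1), F j)
            = (∑ j ∈ Finset.Icc (a + 2) n, F j) + F (n + 1) :=
          Finset.sum_Icc_succ_top (by omega) F
        have h3 : (∑ j ∈ Finset.Icc (a + 3) (n + 1), g (j - 3))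
            = (∑ j ∈ Finset.Icc (a + 3) n, g (j - 3)) + g (n + 1 - 3) :=
          Finset.sum_Icc_succ_top (by omega) _
        have hFn : F (n + 1) = g (n + 1 - 3) := by
          simp only [hF, hg]
          have e1 : η (u + 1) (n + 1) = η u (n - 1) := by
            have h' := hr2 (n + 1) (by omega) htM
            rwa [show n + 1 - 2 = n - 1 by omega] at h'
          have e2 : η (u + 1) n = η u (n - 2) := by
            exact hr2 n (by omega) (by omega)
          rw [show n + 1 - 3 = n - 2 by omega, show n - 2 + 1 = n - 1 by omega,
            show n + 1 - 1 = n by omega, e1, e2]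
          ring
        rw [h1, h3, ih (by omega) (by omega), hFn]
        ring
  -- rewrite κ's sum with shifted indices
  have reindex : (∑ i ∈ Finset.Icc a (M - 3), g i)
      = ∑ j ∈ Finset.Icc (a + 3) M, g (j - 3) := by
    rcases Nat.lt_or_ge M (a + 3) with hc | hc
    · have hM2 : M = a + 2 := by omega
      rw [Finset.Icc_eq_empty (by omega : ¬ a + 3 ≤ M), Finset.sum_empty]
      rcases Nat.eq_zero_or_pos a with h0 | h0
      · have hs : Finset.Icc a (M - 3) = {0} := by
          ext x; simp only [Finset.mem_Icc, Finset.mem_insert, Finset.mem_singleton]; omega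
        rw [hs, Finset.sum_singleton]
        have h2' := hm2
        rw [show M - 2 = 0 by omega, show M - 1 = 1 by omega] at h2'
        simp only [hg]
        norm_num
        linarith
      · rw [Finset.Icc_eq_empty (by omega), Finset.sum_empty]
    · have h1 : Finset.Icc (a + 3) M = (Finset.Icc a (M - 3)).map (addRightEmbedding 3) := by
        rw [Finset.map_add_right_Icc]
        congr 1; omega
      rw [h1, Finset.sum_map]
      apply Finset.sum_congr rfl
      intro x hx
      simp only [addRightEmbedding_apply]
      rw [Nat.add_sub_cancel]
  have hκ' : κ u = h u - η u a +
      ∑ j ∈ Finset.Icc (a + 3) M, g (j - 3) := by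
    rw [hκ, ← reindex]
  refine ⟨hm1, ?_, ?_⟩
  · -- κ u ≤ S M
    rcases Nat.lt_or_ge M (a + 3) with hc | hc
    · -- M = a + 2
      have hM2 : M = a + 2 := by omega
      have e1 : (∑ j ∈ Finset.Icc (a + 2) M, F j) = F (a + 2) := by
        rw [hM2, Finset.Icc_self, Finset.sum_singleton]
      have e2 : F (a + 2) = h u - η u (a + 2) := by
        simp only [hF]
        have h1 : η (u + 1) (a + 2) = η u (a + 2) := hr1 (a + 2) (Or.inr (by omega))
        have h2 : η (u + 1) (a + 2 - 1) = 0 := by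
          rw [show a + 2 - 1 = 2 * u + 1 by omega]; exact hr4
        rw [h1, h2]; ring
      have e3 : (∑ j ∈ Finset.Icc (a + 3) M, g (j - 3)) = 0 := by
        rw [Finset.Icc_eq_empty (by omega), Finset.sum_empty]
      have h4 : η u a + η u (a + 1) = h u := by
        have := hm2
        rwa [show M - 2 = a by omega, show M - 1 = a + 1 by omega] at this
      have h5 : η u (a + 1) + η u (a + 2) ≤ h u := by
        have := hh1 (a + 1) (by omega)
        rwa [show a + 1 + 1 = a + 2 by omega] at this
      rw [hκ', e1, e2, e3]
      linarith
    · -- M ≥ a + 3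
      have eS : Finset.Icc (a + 2) M = insert M (Finset.Icc (a + 2) (M - 1)) := by
        ext x; simp only [Finset.mem_Icc, Finset.mem_insert, Finset.mem_singleton]; omega
      have eG : Finset.Icc (a + 3) M = insert M (Finset.Icc (a + 3) (M - 1)) := by
        ext x; simp only [Finset.mem_Icc, Finset.mem_insert, Finset.mem_singleton]; omega
      have hSni : M ∉ Finset.Icc (a + 2) (M - 1) := by
        simp only [Finset.mem_Icc]; omega
      have hGni : M ∉ Finset.Icc (a + 3) (M - 1) := by
        simp only [Finset.mem_Icc]; omega
      have e1 : (∑ j ∈ Finset.Icc (a + 2) M, F j)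
          = F M + ∑ j ∈ Finset.Icc (a + 2) (M - 1), F j := by
        rw [eS, Finset.sum_insert hSni]
      have e2 : (∑ j ∈ Finset.Icc (a + 3) M, g (j - 3))
          = g (M - 3) + ∑ j ∈ Finset.Icc (a + 3) (M - 1), g (j - 3) := by
        rw [eG, Finset.sum_insert hGni]
      have e3 := Sform (M - 1) (by omega) (by omega)
      have eFM : F M = h u - (η u M + η u (M - 3)) := by
        simp only [hF]
        have h1 : η (u + 1) M = η u M := hr1 M (Or.inr le_rfl)
        have h2 : η (u + 1) (M - 1) = η u (M - 3) := by
          have h' := hr2 (M - 1) (by omega) (by omega)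
          rwa [show M - 1 - 2 = M - 3 by omega] at h'
        rw [h1, h2]
      have egM : g (M - 3) = h u - (η u (M - 3) + η u (M - 2)) := by
        simp only [hg]
        rw [show M - 3 + 1 = M - 2 by omega]
      have h4 : η u (M - 2) + η u (M - 1) = h u := hm2
      have h5 : η u (M - 1) + η u M ≤ h u := by
        have := hh1 (M - 1) (by omega)
        rwa [show M - 1 + 1 = M by omega] at this
      rw [hκ', e1, e2, e3, eFM, egM]
      linarith
  · -- strict inequality for t < M
    intro t ht htM
    rw [Sform t ht htM, hκ']
    have hins : insert (t + 1) (Finset.Icc (a + 3) t) ⊆ Finset.Icc (a + 3) M := by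
      intro x hx
      simp only [Finset.mem_insert, Finset.mem_Icc] at hx ⊢
      omega
    have hni : (t + 1) ∉ Finset.Icc (a + 3) t := by
      simp only [Finset.mem_Icc]; omega
    have hsub : (∑ j ∈ Finset.Icc (a + 3) t, g (j - 3)) + g (t - 2)
        ≤ ∑ j ∈ Finset.Icc (a + 3) M, g (j - 3) := by
      calc (∑ j ∈ Finset.Icc (a + 3) t, g (j - 3)) + g (t - 2)
          = ∑ j ∈ insert (t + 1) (Finset.Icc (a + 3) t), g (j - 3) := by
            rw [Finset.sum_insert hni, show t + 1 - 3 = t - 2 by omega]; ring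
        _ ≤ _ := by
            apply Finset.sum_le_sum_of_subset_of_nonneg hins
            intro j hj _
            apply hgnn
            simp only [Finset.mem_Icc] at hj
            omega
    have hgt : 0 < g (t - 2) := by
      have h1 := hh1 (t - 2) (by omega)
      have h2 := hm3 t ht htM
      rw [show t - 2 + 1 = t - 1 by omega] at h1
      have h3 := lt_of_le_of_ne h1 h2
      simp only [hg]
      rw [show t - 2 + 1 = t - 1 by omega]
      linarith
    linarith
end

section
/- In the setting of the extraction map Γ applied to ν ∈ A_r, let i ∈ {0, ..., r-1}. (1) If ν ∈ A_{i,r} (i.e. additionally f_0 ≤ i), then η_{2u}^{(u)} ≤ i for all u ∈ {0, ..., U}, where U is the first index with h_U = 0. (2) If ν ∈ T_{i+1,r} (i.e. f_0 = 0 and f_1 ≤ i), then η_{2u}^{(u)} = 0 and η_{2u+1}^{(u)} ≤ i for all u ∈ {0, ..., U}. Moreover, for all u ∈ {0, ..., U-1}, (m_u - 2)·η_{m_u-2}^{(u)} + (m_u - 1)·η_{m_u-1}^{(u)} ≡ κ_u (mod 2). -/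
private lemma pairsum_aux (a : ℕ → ℤ) (s : ℕ) : ∀ n : ℕ,
    ∑ j ∈ Finset.range n, (a (s + j) + a (s + j + 1))
      = 2 * (∑ j ∈ Finset.range n, a (s + j)) - a s + a (s + n) := by
  intro n
  induction n with
  | zero => simp
  | succ n ih =>
    rw [Finset.sum_range_succ, ih, Finset.sum_range_succ,
      show s + (n + 1) = s + n + 1 by omega]
    ring

/-- in the setting of the extraction map `Γ` applied to `ν ∈ A_r`, with
`U` the first index where `h` vanishes: (1) if moreover `ν ∈ A_{i,r}` (`f_0 ≤ i`) then
`η_{2u}^{(u)} ≤ i` for all `u ≤ U`; (2) if `ν ∈ T_{i+1,r}` (`f_0 = 0, f_1 ≤ i`) then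
`η_{2u}^{(u)} = 0` and `η_{2u+1}^{(u)} ≤ i` for all `u ≤ U`; (3) for all `u < U`,
`(m_u-2)·η_{m_u-2}^{(u)} + (m_u-1)·η_{m_u-1}^{(u)} ≡ κ_u (mod 2)`. -/
theorem stmt_19 (r : ℕ) (hr : 2 ≤ r) (i : ℕ) (hi : i ≤ r - 1)
    (η : ℕ → ℕ → ℤ)
    (hpos : ∀ j, 0 ≤ η 0 j) (hfin : ∃ N, ∀ j, N ≤ j → η 0 j = 0)
    (hA0 : η 0 0 ≤ (r : ℤ) - 1) (hA : ∀ j, η 0 j + η 0 (j + 1) ≤ (r : ℤ) - 1)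
    (h : ℕ → ℤ)
    (hh : ∀ u, (∀ j, 2 * u ≤ j → η u j + η u (j + 1) ≤ h u) ∧
      ∃ j, 2 * u ≤ j ∧ η u j + η u (j + 1) = h u)
    (m : ℕ → ℕ)
    (hm : ∀ u, 2 * u + 2 ≤ m u ∧ η u (m u - 2) + η u (m u - 1) = h u ∧
      ∀ j, 2 * u + 2 ≤ j → j < m u → η u (j - 2) + η u (j - 1) ≠ h u)
    (hrec : ∀ u, (∀ j, j < 2 * u ∨ m u ≤ j → η (u + 1) j = η u j) ∧
      (∀ j, 2 * u + 2 ≤ j → j < m u → η (u + 1) j = η u (j - 2)) ∧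
      η (u + 1) (2 * u) = h u ∧ η (u + 1) (2 * u + 1) = 0)
    (U : ℕ) (hU0 : h U = 0) (hUmin : ∀ v, v < U → h v ≠ 0) :
    let κ : ℕ → ℤ := fun u => h u - η u (2 * u) +
      ∑ j ∈ Finset.Icc (2 * u) (m u - 3), (h u - (η u j + η u (j + 1)))
    ((η 0 0 ≤ (i : ℤ)) → ∀ u, u ≤ U → η u (2 * u) ≤ (i : ℤ)) ∧
    ((η 0 0 = 0 ∧ η 0 1 ≤ (i : ℤ)) → ∀ u, u ≤ U →
      η u (2 * u) = 0 ∧ η u (2 * u + 1) ≤ (i : ℤ)) ∧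
    (∀ u, u < U →
      (((m u : ℤ) - 2) * η u (m u - 2) + ((m u : ℤ) - 1) * η u (m u - 1)) % 2
        = κ u % 2) := by
  intro κ
  -- nonnegativity propagates
  have hnn : ∀ u j, 0 ≤ η u j := by
    intro u
    induction u with
    | zero => exact hpos
    | succ u ih =>
      intro j
      obtain ⟨h1, h2, h3, h4⟩ := hrec u
      by_cases hj1 : j < 2 * u
      · rw [h1 j (Or.inl hj1)]; exact ih j
      by_cases hj2 : m u ≤ j
      · rw [h1 j (Or.inr hj2)]; exact ih j
      by_cases hj3 : j = 2 * u
      · rw [hj3, h3]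
        obtain ⟨_, j0, _, he⟩ := hh u
        rw [← he]
        exact add_nonneg (ih _) (ih _)
      by_cases hj4 : j = 2 * u + 1
      · rw [hj4, h4]
      · rw [h2 j (by omega) (by omega)]
        exact ih _
  refine ⟨?_, ?_, ?_⟩
  · -- Part 1
    intro h0 u _
    clear hU0 hUmin
    induction u with
    | zero => simpa using h0
    | succ u ih =>
      have ih' := ih (by omega)
      obtain ⟨h1, h2, h3, h4⟩ := hrec u
      obtain ⟨hm1, hm2, hm3⟩ := hm u
      by_cases hc : 2 * u + 2 < m u
      · have e := h2 (2 * u + 2) le_rfl hc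
        rw [show 2 * (u + 1) = 2 * u + 2 by ring, e, show 2 * u + 2 - 2 = 2 * u by omega]
        exact ih'
      · have hmu : m u = 2 * u + 2 := by omega
        have e : η (u + 1) (2 * (u + 1)) = η u (2 * u + 2) := by
          rw [show 2 * (u + 1) = 2 * u + 2 by ring]
          exact h1 _ (Or.inr (by omega))
        rw [hmu, show 2 * u + 2 - 2 = 2 * u by omega,
          show 2 * u + 2 - 1 = 2 * u + 1 by omega] at hm2
        have hle : η u (2 * u + 1) + η u (2 * u + 2) ≤ h u := (hh u).1 _ (by omega)
        rw [e]
        linarith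
  · -- Part 2
    intro h0T u _
    obtain ⟨h00, h01⟩ := h0T
    clear hU0 hUmin
    induction u with
    | zero => exact ⟨by simpa using h00, by simpa using h01⟩
    | succ u ih =>
      obtain ⟨ih0, ih1⟩ := ih (by omega)
      obtain ⟨h1, h2, h3, h4⟩ := hrec u
      obtain ⟨hm1, hm2, hm3⟩ := hm u
      rw [show 2 * (u + 1) = 2 * u + 2 by ring]
      by_cases hc : m u = 2 * u + 2
      · have e2 : η (u + 1) (2 * u + 2) = η u (2 * u + 2) := h1 _ (Or.inr (by omega))
        have e3 : η (u + 1) (2 * u + 2 + 1) = η u (2 * u + 2 + 1) := h1 _ (Or.inr (by omega))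
        rw [hc, show 2 * u + 2 - 2 = 2 * u by omega,
          show 2 * u + 2 - 1 = 2 * u + 1 by omega] at hm2
        have hle : η u (2 * u + 1) + η u (2 * u + 2) ≤ h u := (hh u).1 _ (by omega)
        have hle2 : η u (2 * u + 2) + η u (2 * u + 2 + 1) ≤ h u := (hh u).1 _ (by omega)
        have hz : η u (2 * u + 2) = 0 := le_antisymm (by linarith) (hnn u _)
        refine ⟨by rw [e2, hz], ?_⟩
        rw [e3]
        linarith
      by_cases hc2 : m u = 2 * u + 3
      · have e2 : η (u + 1) (2 * u + 2) = η u (2 * u) := by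
          rw [h2 (2 * u + 2) le_rfl (by omega), show 2 * u + 2 - 2 = 2 * u by omega]
        have e3 : η (u + 1) (2 * u + 2 + 1) = η u (2 * u + 2 + 1) :=
          h1 _ (Or.inr (by omega))
        rw [hc2, show 2 * u + 3 - 2 = 2 * u + 1 by omega,
          show 2 * u + 3 - 1 = 2 * u + 2 by omega] at hm2
        have hle2 : η u (2 * u + 2) + η u (2 * u + 2 + 1) ≤ h u := (hh u).1 _ (by omega)
        refine ⟨by rw [e2, ih0], ?_⟩
        rw [e3]
        have hnn2 := hnn u (2 * u + 2)
        linarith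
      · have e2 : η (u + 1) (2 * u + 2) = η u (2 * u) := by
          rw [h2 (2 * u + 2) le_rfl (by omega), show 2 * u + 2 - 2 = 2 * u by omega]
        have e3 : η (u + 1) (2 * u + 2 + 1) = η u (2 * u + 1) := by
          rw [h2 (2 * u + 3) (by omega) (by omega), show 2 * u + 3 - 2 = 2 * u + 1 by omega]
        exact ⟨by rw [e2, ih0], by rw [e3]; exact ih1⟩
  · -- Part 3
    intro u _
    obtain ⟨hm1, hm2, _⟩ := hm u
    suffices hs : ∃ w : ℤ, ((m u : ℤ) - 2) * η u (m u - 2) + ((m u : ℤ) - 1) * η u (m u - 1)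
        = κ u + 2 * w by
      obtain ⟨w, hw⟩ := hs
      rw [hw, Int.add_mul_emod_self_left]
    by_cases hu2 : m u = 2
    · have hu0 : u = 0 := by omega
      subst hu0
      refine ⟨0, ?_⟩
      show ((m 0 : ℤ) - 2) * η 0 (m 0 - 2) + ((m 0 : ℤ) - 1) * η 0 (m 0 - 1)
        = h 0 - η 0 (2 * 0) + ∑ j ∈ Finset.Icc (2 * 0) (m 0 - 3),
          (h 0 - (η 0 j + η 0 (j + 1))) + 2 * 0
      rw [hu2] at hm2 ⊢
      norm_num at hm2 ⊢
      linarith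
    · -- general case : m u ≥ 3
      have hm3 : 3 ≤ m u := by omega
      set n : ℕ := m u - 2 - 2 * u with hn
      have hIcc : ∑ j ∈ Finset.Icc (2 * u) (m u - 3), (h u - (η u j + η u (j + 1)))
          = ∑ j ∈ Finset.range n, (h u - (η u (2 * u + j) + η u (2 * u + j + 1))) := by
        rw [← Finset.Ico_add_one_right_eq_Icc, Finset.sum_Ico_eq_sum_range,
          show m u - 3 + 1 - 2 * u = n by omega]
      have hsplit : ∑ j ∈ Finset.range n, (h u - (η u (2 * u + j) + η u (2 * u + j + 1)))
          = (n : ℤ) * h u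
            - ∑ j ∈ Finset.range n, (η u (2 * u + j) + η u (2 * u + j + 1)) := by
        rw [Finset.sum_sub_distrib]
        simp [mul_comm]
      have hpair := pairsum_aux (η u) (2 * u) n
      have hend : 2 * u + n = m u - 2 := by omega
      rw [hend] at hpair
      set S : ℤ := ∑ j ∈ Finset.range n, η u (2 * u + j) with hS
      refine ⟨(u : ℤ) * h u + S, ?_⟩
      show ((m u : ℤ) - 2) * η u (m u - 2) + ((m u : ℤ) - 1) * η u (m u - 1)
        = h u - η u (2 * u) + ∑ j ∈ Finset.Icc (2 * u) (m u - 3),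
          (h u - (η u j + η u (j + 1))) + 2 * ((u : ℤ) * h u + S)
      rw [hIcc, hsplit, hpair]
      have hcast : (n : ℤ) = (m u : ℤ) - 2 - 2 * (u : ℤ) := by
        have h1 : 2 * u + 2 ≤ m u := hm1
        push_cast [hn]
        omega
      have hm1' : η u (m u - 1) = h u - η u (m u - 2) := by linarith
      rw [hm1', hcast]
      ring
end
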